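/- arXiv:1507.08965 — 11 statements merged into one kernel-verified Lean document; each statement's English description precedes it below -/
import Mathlib

section
/- (i) If e and f are effects with ef = fe, then ef is an effect and ef ≤ e and ef ≤ f. (ii) If p is a projection and f is an effect with pf = fp, then pf = fp = pfp and pf is the infimum of p and f in the set of effects; that is, pf ≤ p, pf ≤ f, and every effect g with g ≤ p and g ≤ f satisfies g ≤ pf. -/
open StarAlgebra in
lemma commute_of_mem_elemental' {A : Type*} [CStarAlgebra A] {e f b : A}
    (hef : Commute e f) (he : IsSelfAdjoint e) (hb : b ∈ elemental ℂ e) : Commute b f := by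
  induction hb using elemental.induction_on with
  | self => exact hef
  | star_self => rwa [he.star_eq]
  | algebraMap r => exact Algebra.commutes r f
  | add u hu v hv pu pv => exact pu.add_left pv
  | mul u hu v hv pu pv => exact pu.mul_left pv
  | closure s hs hmem v hv =>
      have hcl : IsClosed {x : A | Commute x f} := isClosed_eq (by fun_prop) (by fun_prop)
      exact closure_minimal (fun u hu => hmem u hu) hcl hv

lemma cfc_mem_elemental' {A : Type*} [CStarAlgebra A] (e : A) (g : ℂ → ℂ) :
    cfc g e ∈ StarAlgebra.elemental ℂ e := by
  refine cfc_cases (· ∈ StarAlgebra.elemental ℂ e) e g (zero_mem _) fun hg he ↦ ?_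
  rw [cfcHom_eq_of_isStarNormal]
  exact Subtype.coe_prop _

/-- A commuting positive square root witness. -/
lemma exists_commuting_sqrt {A : Type*} [CStarAlgebra A] [PartialOrder A] [StarOrderedRing A]
    {e f : A} (he : 0 ≤ e) (hef : Commute e f) :
    ∃ s : A, 0 ≤ s ∧ s * s = e ∧ Commute s f := by
  refine ⟨cfc Real.sqrt e, cfc_nonneg fun x _ ↦ Real.sqrt_nonneg x, ?_, ?_⟩
  · rw [← cfc_mul _ _ e (by fun_prop) (by fun_prop)]
    have : ∀ x ∈ spectrum ℝ e, Real.sqrt x * Real.sqrt x = x := fun x hx ↦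
      Real.mul_self_sqrt (spectrum_nonneg_of_nonneg he hx)
    rw [cfc_congr this, cfc_id' ℝ e]
  · refine commute_of_mem_elemental' hef (.of_nonneg he) ?_
    rw [cfc_real_eq_complex _ (IsSelfAdjoint.of_nonneg he)]
    exact cfc_mem_elemental' e _

/-- In a unital C*-algebra:
(i) if `e, f` are commuting effects then `ef` is an effect with `ef ≤ e` and `ef ≤ f`;
(ii) if `p` is a projection and `f` an effect with `pf = fp`, then `pf = pfp` and
`pf` is the infimum of `p` and `f` in the set of effects. -/
theorem stmt2 {A : Type*} [CStarAlgebra A] [PartialOrder A] [StarOrderedRing A] :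
    (∀ e f : A, 0 ≤ e → e ≤ 1 → 0 ≤ f → f ≤ 1 → e * f = f * e →
      0 ≤ e * f ∧ e * f ≤ 1 ∧ e * f ≤ e ∧ e * f ≤ f) ∧
    (∀ p f : A, IsSelfAdjoint p → p ^ 2 = p → 0 ≤ f → f ≤ 1 → p * f = f * p →
      p * f = p * f * p ∧ p * f ≤ p ∧ p * f ≤ f ∧
        ∀ g : A, 0 ≤ g → g ≤ 1 → g ≤ p → g ≤ f → g ≤ p * f) := by
  constructor
  · intro e f he0 he1 hf0 hf1 hc
    obtain ⟨s, hs0, hss, hsf⟩ := exists_commuting_sqrt he0 hc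
    have hsstar : star s = s := (IsSelfAdjoint.of_nonneg hs0).star_eq
    have hef_eq : e * f = s * f * s := by
      conv_lhs => rw [← hss, mul_assoc, hsf.eq, ← mul_assoc]
    have h2 : e * f ≤ e := by
      have h := star_left_conjugate_nonneg (sub_nonneg.mpr hf1) s
      rw [hsstar] at h
      have heq : s * (1 - f) * s = e - e * f := by
        rw [mul_sub, mul_one, sub_mul, hss, hef_eq]
      rw [heq] at h
      exact sub_nonneg.mp h
    refine ⟨?_, h2.trans he1, h2, ?_⟩
    · have h := star_left_conjugate_nonneg hf0 s
      rw [hsstar] at h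
      rwa [hef_eq]
    · obtain ⟨t, ht0, htt, hte⟩ := exists_commuting_sqrt hf0 hc.symm
      have htstar : star t = t := (IsSelfAdjoint.of_nonneg ht0).star_eq
      have hfe_eq : f * e = t * e * t := by
        conv_lhs => rw [← htt, mul_assoc, hte.eq, ← mul_assoc]
      have h := star_left_conjugate_nonneg (sub_nonneg.mpr he1) t
      rw [htstar] at h
      have heq : t * (1 - e) * t = f - e * f := by
        rw [mul_sub, mul_one, sub_mul, htt, hc, hfe_eq]
      rw [heq] at h
      exact sub_nonneg.mp h
  · intro p f hp hp2 hf0 hf1 hc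
    have hpp : p * p = p := by rw [← pow_two, hp2]
    have hps : star p = p := hp.star_eq
    have hpfp : p * f = p * f * p := by
      calc p * f = f * p := hc
        _ = f * (p * p) := by rw [hpp]
        _ = p * f * p := by rw [← mul_assoc, ← hc]
    have hqs : star (1 - p) = 1 - p := by simp [hps]
    refine ⟨hpfp, ?_, ?_, ?_⟩
    · have h := star_left_conjugate_le_conjugate hf1 p
      rw [hps, mul_one, hpp] at h
      rw [hpfp]; exact h
    · have h := star_left_conjugate_nonneg hf0 (1 - p)
      rw [hqs] at h
      have heq : (1 - p) * f * (1 - p) = f - p * f := by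
        have h1 : p * f * p = p * f := hpfp.symm
        calc (1 - p) * f * (1 - p) = f - f * p - (p * f - p * f * p) := by noncomm_ring
          _ = f - f * p := by rw [h1, sub_self, sub_zero]
          _ = f - p * f := by rw [hc]
      rw [heq] at h
      exact sub_nonneg.mp h
    · intro g hg0 hg1 hgp hgf
      have hgs : star g = g := (IsSelfAdjoint.of_nonneg hg0).star_eq
      have hqpq : (1 - p) * p * (1 - p) = 0 := by
        have h : (1 - p) * p = p - p * p := by noncomm_ring
        rw [h, hpp, sub_self, zero_mul]
      have h1 : (1 - p) * g * (1 - p) ≤ 0 := by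
        have h := star_left_conjugate_le_conjugate hgp (1 - p)
        rwa [hqs, hqpq] at h
      have h2 : (0 : A) ≤ (1 - p) * g * (1 - p) := by
        have h := star_left_conjugate_nonneg hg0 (1 - p)
        rwa [hqs] at h
      have h3 : (1 - p) * g * (1 - p) = 0 := le_antisymm h1 h2
      obtain ⟨t, ht0, htt, -⟩ := exists_commuting_sqrt hg0 (Commute.refl g)
      have hts : star t = t := (IsSelfAdjoint.of_nonneg ht0).star_eq
      have h4 : t * (1 - p) = 0 := by
        rw [← CStarRing.star_mul_self_eq_zero_iff]
        calc star (t * (1 - p)) * (t * (1 - p))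
            = (1 - p) * (t * t) * (1 - p) := by rw [star_mul, hts, hqs]; noncomm_ring
          _ = 0 := by rw [htt, h3]
      have h5 : g * (1 - p) = 0 := by
        calc g * (1 - p) = t * (t * (1 - p)) := by rw [← mul_assoc, htt]
          _ = 0 := by rw [h4, mul_zero]
      have h6 : (1 - p) * g = 0 := by
        have h := congrArg star h5
        rwa [star_mul, hgs, hqs, star_zero] at h
      have h7 : p * g * p = g := by
        have hgp' : g * p = g := (sub_eq_zero.mp (by rwa [mul_one_sub] at h5)).symm
        have hpg' : p * g = g := (sub_eq_zero.mp (by rwa [one_sub_mul] at h6)).symm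
        rw [hpg', hgp']
      have h8 : p * f - g = p * (f - g) * p := by
        rw [mul_sub, sub_mul, ← hpfp, h7]
      have h := star_left_conjugate_nonneg (sub_nonneg.mpr hgf) p
      rw [hps] at h
      rw [← sub_nonneg, h8]
      exact h
end

section
/- Let p be a projection and e an effect, with cosine c and sine s. Then: (i) c² = 1 − p + pe + ep − e; (ii) s² = p − pe − ep + e; (iii) c² + s² = 1; (iv) c²p = pc² = pep and s²p⊥ = p⊥s² = p⊥ep⊥; (v) c and s commute with p, and c commutes with s; (vi) c, s, cs, c², s², and c²s² are all effects, c² ≤ c, and s² ≤ s. -/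
/-!
Because `p` is idempotent, both `c²` and `s²` are block diagonal with respect to `p`, and
expanding the products shows `c² + s² = 1`. A block-diagonal element commutes with `p`, and an
element commuting with `c²` commutes with its nonnegative square root `c` (continuous functional
calculus); likewise `s` commutes with `p`, and with `c` because `s² = 1 - c²`. The order
statements then only use that `c, s` are commuting nonnegative elements with `c² + s² = 1`:
`c² ≤ 1` gives `c ≤ 1` by operator monotonicity of the square root, and products of commuting
nonnegative elements are nonnegative, so `c * s ≤ s` because `(1 - c) * s ≥ 0`.
-/

namespace IsIdempotentElem

variable {R : Type*} [Ring R] {p : R}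

lemma corner_add_corner_compl_mul (hp : IsIdempotentElem p) (a b : R) :
    (p * a * p + (1 - p) * b * (1 - p)) * p = p * a * p := by
  have hqp : (1 - p) * p = 0 := by rw [sub_mul, one_mul, hp.eq, sub_self]
  rw [add_mul, mul_assoc (p * a), hp.eq, mul_assoc ((1 - p) * b), hqp, mul_zero, add_zero]

lemma mul_corner_add_corner_compl (hp : IsIdempotentElem p) (a b : R) :
    p * (p * a * p + (1 - p) * b * (1 - p)) = p * a * p := by
  have hpq : p * (1 - p) = 0 := by rw [mul_sub, mul_one, hp.eq, sub_self]
  rw [mul_add, ← mul_assoc, ← mul_assoc, hp.eq, ← mul_assoc, ← mul_assoc, hpq, zero_mul,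
    zero_mul, add_zero]

lemma commute_corner_add_corner_compl (hp : IsIdempotentElem p) (a b : R) :
    Commute (p * a * p + (1 - p) * b * (1 - p)) p :=
  (hp.corner_add_corner_compl_mul a b).trans (hp.mul_corner_add_corner_compl a b).symm

lemma corner_add_corner_compl_one_sub (hp : IsIdempotentElem p) (e : R) :
    p * e * p + (1 - p) * (1 - e) * (1 - p) = 1 - p + p * e + e * p - e := by
  noncomm_ring [hp.eq]

lemma corner_one_sub_add_corner_compl (hp : IsIdempotentElem p) (e : R) :
    p * (1 - e) * p + (1 - p) * e * (1 - p) = p - p * e - e * p + e := by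
  noncomm_ring [hp.eq]

end IsIdempotentElem

namespace CStarAlgebra

variable {A : Type*} [CStarAlgebra A] [PartialOrder A] [StarOrderedRing A]

lemma commute_of_commute_sq {a b : A} (ha : 0 ≤ a) (h : Commute (a ^ 2) b) : Commute a b := by
  simpa [← CFC.sqrt_eq_cfc, CFC.sqrt_sq a ha] using h.cfc_nnreal NNReal.sqrt

lemma le_one_of_sq_le_one {a : A} (ha : 0 ≤ a) (h : a ^ 2 ≤ 1) : a ≤ 1 := by
  simpa [CFC.sqrt_sq a ha, CFC.sqrt_one] using CFC.sqrt_le_sqrt _ _ h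

lemma sq_le_self {a : A} (ha₀ : 0 ≤ a) (ha₁ : a ≤ 1) : a ^ 2 ≤ a :=
  (pow_antitone ha₀ ha₁ one_le_two).trans_eq (pow_one a)

lemma mul_le_of_le_one_of_commute {a b : A} (ha₁ : a ≤ 1) (hb : 0 ≤ b) (h : Commute a b) :
    a * b ≤ b := by
  have : 0 ≤ (1 - a) * b :=
    Commute.mul_nonneg (sub_nonneg.mpr ha₁) hb ((Commute.one_left b).sub_left h)
  rwa [sub_mul, one_mul, sub_nonneg] at this

lemma sq_le_one_of_sq_add_sq_eq_one {a b : A} (hb : 0 ≤ b) (h : a ^ 2 + b ^ 2 = 1) :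
    a ^ 2 ≤ 1 :=
  h ▸ le_add_of_nonneg_right (pow_nonneg hb 2)

lemma commute_of_sq_add_sq_eq_one {a b : A} (hb : 0 ≤ b) (h : a ^ 2 + b ^ 2 = 1) :
    Commute a b := by
  refine (commute_of_commute_sq hb ?_).symm
  rw [eq_sub_of_add_eq' h]
  exact (Commute.one_left a).sub_left ((Commute.refl a).pow_left 2)

end CStarAlgebra

theorem stmt5_general {A : Type*} [CStarAlgebra A] [PartialOrder A] [StarOrderedRing A]
    (p e c s : A) (hp2 : p ^ 2 = p)
    (hc0 : 0 ≤ c) (hc2 : c ^ 2 = p * e * p + (1 - p) * (1 - e) * (1 - p))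
    (hs0 : 0 ≤ s) (hs2 : s ^ 2 = p * (1 - e) * p + (1 - p) * e * (1 - p)) :
    c ^ 2 = 1 - p + p * e + e * p - e ∧
    s ^ 2 = p - p * e - e * p + e ∧
    c ^ 2 + s ^ 2 = 1 ∧
    (c ^ 2 * p = p * c ^ 2 ∧ c ^ 2 * p = p * e * p ∧
      s ^ 2 * (1 - p) = (1 - p) * s ^ 2 ∧ s ^ 2 * (1 - p) = (1 - p) * e * (1 - p)) ∧
    (c * p = p * c ∧ s * p = p * s ∧ c * s = s * c) ∧
    ((0 ≤ c ∧ c ≤ 1) ∧ (0 ≤ s ∧ s ≤ 1) ∧ (0 ≤ c * s ∧ c * s ≤ 1) ∧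
      (0 ≤ c ^ 2 ∧ c ^ 2 ≤ 1) ∧ (0 ≤ s ^ 2 ∧ s ^ 2 ≤ 1) ∧
      (0 ≤ c ^ 2 * s ^ 2 ∧ c ^ 2 * s ^ 2 ≤ 1) ∧ c ^ 2 ≤ c ∧ s ^ 2 ≤ s) := by
  open CStarAlgebra in
  have hp : IsIdempotentElem p := (sq p).symm.trans hp2
  have hs2' : s ^ 2 = (1 - p) * e * (1 - p) + (1 - (1 - p)) * (1 - e) * (1 - (1 - p)) := by
    rw [hs2, sub_sub_cancel, add_comm]
  have h1 := hc2.trans (hp.corner_add_corner_compl_one_sub e)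
  have h2 := hs2.trans (hp.corner_one_sub_add_corner_compl e)
  have h3 : c ^ 2 + s ^ 2 = 1 := by rw [h1, h2]; abel
  have h3' : s ^ 2 + c ^ 2 = 1 := (add_comm _ _).trans h3
  have hc2p : Commute (c ^ 2) p := hc2 ▸ hp.commute_corner_add_corner_compl e (1 - e)
  have hs2q : Commute (s ^ 2) (1 - p) :=
    hs2' ▸ hp.one_sub.commute_corner_add_corner_compl e (1 - e)
  have hs2p : Commute (s ^ 2) p := by simpa using (Commute.one_right _).sub_right hs2q
  have hcs := commute_of_sq_add_sq_eq_one hs0 h3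
  have hc2₁ := sq_le_one_of_sq_add_sq_eq_one hs0 h3
  have hs2₁ := sq_le_one_of_sq_add_sq_eq_one hc0 h3'
  have hc₁ := le_one_of_sq_le_one hc0 hc2₁
  have hs₁ := le_one_of_sq_le_one hs0 hs2₁
  have hc2₀ := pow_nonneg hc0 2
  have hs2₀ := pow_nonneg hs0 2
  have hcs2 := hcs.pow_pow 2 2
  refine ⟨h1, h2, h3, ⟨hc2p.eq, ?_, hs2q.eq, ?_⟩, ⟨(commute_of_commute_sq hc0 hc2p).eq,
    (commute_of_commute_sq hs0 hs2p).eq, hcs.eq⟩, ⟨hc0, hc₁⟩, ⟨hs0, hs₁⟩,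
    ⟨hcs.mul_nonneg hc0 hs0, (mul_le_of_le_one_of_commute hc₁ hs0 hcs).trans hs₁⟩,
    ⟨hc2₀, hc2₁⟩, ⟨hs2₀, hs2₁⟩,
    ⟨hcs2.mul_nonneg hc2₀ hs2₀, (mul_le_of_le_one_of_commute hc2₁ hs2₀ hcs2).trans hs2₁⟩,
    sq_le_self hc0 hc₁, sq_le_self hs0 hs₁⟩
  · rw [hc2, hp.corner_add_corner_compl_mul]
  · rw [hs2', hp.one_sub.corner_add_corner_compl_mul]

/-- In a unital C*-algebra, let `p` be a projection, `e` an effect,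
and let `c` (the cosine) be the nonnegative square root of `pep + p⊥e⊥p⊥` and `s`
(the sine) the nonnegative square root of `pe⊥p + p⊥ep⊥` (encoded by `0 ≤ c`,
`c² = pep + p⊥e⊥p⊥`, etc., which determines them uniquely). Then:
(i) `c² = 1 − p + pe + ep − e`; (ii) `s² = p − pe − ep + e`; (iii) `c² + s² = 1`;
(iv) `c²p = pc² = pep` and `s²p⊥ = p⊥s² = p⊥ep⊥`;
(v) `c` and `s` commute with `p` and with each other;
(vi) `c, s, cs, c², s², c²s²` are effects, `c² ≤ c`, and `s² ≤ s`. -/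
theorem stmt5 {A : Type*} [CStarAlgebra A] [PartialOrder A] [StarOrderedRing A]
    (p e c s : A) (hp : IsSelfAdjoint p) (hp2 : p ^ 2 = p)
    (he0 : 0 ≤ e) (he1 : e ≤ 1)
    (hc0 : 0 ≤ c) (hc2 : c ^ 2 = p * e * p + (1 - p) * (1 - e) * (1 - p))
    (hs0 : 0 ≤ s) (hs2 : s ^ 2 = p * (1 - e) * p + (1 - p) * e * (1 - p)) :
    c ^ 2 = 1 - p + p * e + e * p - e ∧
    s ^ 2 = p - p * e - e * p + e ∧
    c ^ 2 + s ^ 2 = 1 ∧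
    (c ^ 2 * p = p * c ^ 2 ∧ c ^ 2 * p = p * e * p ∧
      s ^ 2 * (1 - p) = (1 - p) * s ^ 2 ∧ s ^ 2 * (1 - p) = (1 - p) * e * (1 - p)) ∧
    (c * p = p * c ∧ s * p = p * s ∧ c * s = s * c) ∧
    ((0 ≤ c ∧ c ≤ 1) ∧ (0 ≤ s ∧ s ≤ 1) ∧ (0 ≤ c * s ∧ c * s ≤ 1) ∧
      (0 ≤ c ^ 2 ∧ c ^ 2 ≤ 1) ∧ (0 ≤ s ^ 2 ∧ s ^ 2 ≤ 1) ∧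
      (0 ≤ c ^ 2 * s ^ 2 ∧ c ^ 2 * s ^ 2 ≤ 1) ∧ c ^ 2 ≤ c ∧ s ^ 2 ≤ s) :=
  stmt5_general p e c s hp2 hc0 hc2 hs0 hs2
end

section
/- Let p be a projection and e an effect, with cosine c and sine s, and let j² := p(e−e²)p + p⊥(e−e²)p⊥ denote the diagonal part of e − e² with respect to p. Then c²s² = (cs)² = j² + (pep⊥ + p⊥ep)². -/
open scoped NNReal


/-- In a unital C*-algebra, with `p` a projection, `e` an effect,
`c` the cosine and `s` the sine of `e` with respect to `p` (encoded as nonnegative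
square roots via `0 ≤ c`, `c² = pep + p⊥e⊥p⊥`, etc.), and with
`j² = p(e−e²)p + p⊥(e−e²)p⊥` the diagonal part of `e − e²`, we have
`c²s² = (cs)² = j² + (pep⊥ + p⊥ep)²`. -/
theorem stmt6 {A : Type*} [CStarAlgebra A] [PartialOrder A] [StarOrderedRing A]
    (p e c s : A) (hp : IsSelfAdjoint p) (hp2 : p ^ 2 = p)
    (he0 : 0 ≤ e) (he1 : e ≤ 1)
    (hc0 : 0 ≤ c) (hc2 : c ^ 2 = p * e * p + (1 - p) * (1 - e) * (1 - p))
    (hs0 : 0 ≤ s) (hs2 : s ^ 2 = p * (1 - e) * p + (1 - p) * e * (1 - p)) :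
    c ^ 2 * s ^ 2 = (c * s) ^ 2 ∧
    c ^ 2 * s ^ 2 =
      (p * (e - e ^ 2) * p + (1 - p) * (e - e ^ 2) * (1 - p)) +
        (p * e * (1 - p) + (1 - p) * e * p) ^ 2 := by
  rcases subsingleton_or_nontrivial A with hA | hA
  · exact ⟨Subsingleton.elim _ _, Subsingleton.elim _ _⟩
  have hpp : p * p = p := by rw [← sq]; exact hp2
  have hpp' : ∀ x : A, p * (p * x) = p * x := fun x => by rw [← mul_assoc, hpp]
  have hsum : c ^ 2 + s ^ 2 = 1 := by
    rw [hc2, hs2]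
    simp only [mul_sub, sub_mul, mul_add, add_mul, mul_one, one_mul, mul_assoc, hpp, hpp']
    abel
  have hs2' : s ^ 2 = 1 - c ^ 2 := by rw [← hsum]; abel
  have hc2nn : (0 : A) ≤ c ^ 2 := by
    simpa [sq, (IsSelfAdjoint.of_nonneg hc0).star_eq] using star_mul_self_nonneg c
  have hs2nn : (0 : A) ≤ s ^ 2 := by
    simpa [sq, (IsSelfAdjoint.of_nonneg hs0).star_eq] using star_mul_self_nonneg s
  have hc2le : c ^ 2 ≤ 1 := sub_nonneg.mp (hs2' ▸ hs2nn)
  have hspec : ∀ x ∈ spectrum ℝ≥0 (c ^ 2), x ≤ 1 := by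
    intro x hx
    have h1 := spectrum.le_nnnorm_of_mem hx
    have h2 := (CStarAlgebra.nnnorm_le_one_iff_of_nonneg (c ^ 2) hc2nn).mpr hc2le
    exact h1.trans h2
  have hsub : cfc (fun x : ℝ≥0 => 1 - x) (c ^ 2) = 1 - c ^ 2 := by
    have := cfc_tsub (fun _ => (1 : ℝ≥0)) id (c ^ 2) hspec hc2nn
    rw [cfc_const_one ℝ≥0 (c ^ 2)] at this
    rw [cfc_id ℝ≥0 (c ^ 2) hc2nn] at this
    simpa using this
  have hc' : c = cfc NNReal.sqrt (c ^ 2) := by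
    rw [← CFC.sqrt_eq_cfc, CFC.sqrt_sq c hc0]
  have hs' : s = cfc (fun x : ℝ≥0 => NNReal.sqrt (1 - x)) (c ^ 2) := by
    have : s = CFC.sqrt (1 - c ^ 2) := by
      rw [← hs2', CFC.sqrt_sq s hs0]
    rw [this, ← hsub, CFC.sqrt_eq_cfc, ← cfc_comp NNReal.sqrt (fun x : ℝ≥0 => 1 - x) (c ^ 2)]
    rfl
  have hcomm : Commute c s := by
    rw [hc', hs']
    exact cfc_commute_cfc _ _ _
  refine ⟨(hcomm.mul_pow 2).symm, ?_⟩
  have he2 : e ^ 2 = e * p * e + e * (1 - p) * e := by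
    rw [sq]
    simp only [mul_sub, sub_mul, mul_one, one_mul]
    abel
  rw [hc2, hs2, he2]
  simp only [mul_sub, sub_mul, mul_add, add_mul, mul_one, one_mul, sq, mul_assoc, hpp, hpp']
  abel
end

section
/- Let p be a projection and e an effect, with cosine c, sine s, j := (p(e−e²)p + p⊥(e−e²)p⊥)^{1/2}, and commutator effect b := (c²s² − j²)^{1/2}. Then: (i) p commutes with j and p commutes with b; (ii) b is an effect, i.e., 0 ≤ b ≤ 1; (iii) b = |pep⊥ + p⊥ep|, i.e., b = ((pep⊥ + p⊥ep)²)^{1/2}. -/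
private lemma stmt7_key {A : Type*} [Ring A] (p e : A) (hpp : p * p = p) :
    (p*e*p + (1-p)*(1-e)*(1-p)) * (p*(1-e)*p + (1-p)*e*(1-p))
      - (p*(e-e^2)*p + (1-p)*(e-e^2)*(1-p))
    = (p*e*(1-p) + (1-p)*e*p)^2 := by
  have hpp' : ∀ x : A, p * (p * x) = p * x := fun x => by rw [← mul_assoc, hpp]
  simp only [mul_sub, sub_mul, mul_add, add_mul, mul_one, one_mul, pow_two, mul_assoc, hpp, hpp']
  abel

private lemma stmt7_key2 {A : Type*} [Ring A] (p e : A) (hpp : p * p = p) :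
    (p*e*(1-p) + (1-p)*e*p)^2
      = p*(e*(1-p)*e)*p + (1-p)*(e*p*e)*(1-p) := by
  have hpp' : ∀ x : A, p * (p * x) = p * x := fun x => by rw [← mul_assoc, hpp]
  simp only [mul_sub, sub_mul, mul_add, add_mul, mul_one, one_mul, pow_two, mul_assoc, hpp, hpp']
  abel

/-- A selfadjoint symmetry commuting with `x^2` (with `0 ≤ x`) commutes with `x`. -/
private lemma stmt7_symm {A : Type*} [CStarAlgebra A] [PartialOrder A] [StarOrderedRing A]
    (u x : A) (hu_sa : star u = u) (huu : u * u = 1) (hx0 : 0 ≤ x)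
    (hucomm : u * x ^ 2 = x ^ 2 * u) : u * x = x * u := by
  have h1 : 0 ≤ u * x * u := by simpa [hu_sa] using star_left_conjugate_nonneg hx0 u
  have hucomm' : u * (x * x) = (x * x) * u := by
    rw [← pow_two]; exact hucomm
  have h2 : (u * x * u) ^ 2 = x ^ 2 := by
    calc (u * x * u) ^ 2 = u * (x * (u * u) * x) * u := by rw [pow_two]; noncomm_ring
    _ = u * (x * x) * u := by rw [huu, mul_one]
    _ = (x * x) * (u * u) := by rw [hucomm', mul_assoc]
    _ = x ^ 2 := by rw [huu, mul_one, pow_two]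
  have h3 : u * x * u = x := by
    have e1 := CFC.sqrt_sq (u * x * u) h1
    rw [h2, CFC.sqrt_sq x hx0] at e1
    exact e1.symm
  calc u * x = u * x * (u * u) := by rw [huu, mul_one]
  _ = (u * x * u) * u := by noncomm_ring
  _ = x * u := by rw [h3]

/-- If `p` is a projection commuting with `x^2` and `0 ≤ x`, then `p` commutes with `x`. -/
private lemma stmt7_comm {A : Type*} [CStarAlgebra A] [PartialOrder A] [StarOrderedRing A]
    (p x : A) (hp : IsSelfAdjoint p) (hpp : p * p = p) (hx0 : 0 ≤ x)
    (hcomm : p * x ^ 2 = x ^ 2 * p) : p * x = x * p := by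
  have hu_sa : star (p + p - 1) = p + p - 1 := by
    simp [star_sub, star_add, hp.star_eq]
  have huu : (p + p - 1) * (p + p - 1) = 1 := by
    simp only [sub_mul, mul_sub, add_mul, mul_add, one_mul, mul_one, hpp]
    abel
  have hucomm : (p + p - 1) * x ^ 2 = x ^ 2 * (p + p - 1) := by
    simp only [sub_mul, mul_sub, add_mul, mul_add, one_mul, mul_one, hcomm]
  have h4 := stmt7_symm (p + p - 1) x hu_sa huu hx0 hucomm
  have h5 : (2:ℂ) • (p * x) = (2:ℂ) • (x * p) := by
    have hl : p * x + p * x = x * p + x * p := by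
      have expl : (p + p - 1) * x = p * x + p * x - x := by noncomm_ring
      have expr : x * (p + p - 1) = x * p + x * p - x := by noncomm_ring
      rw [expl, expr] at h4
      exact sub_left_injective h4
    rw [show ((2:ℂ) • (p * x)) = p * x + p * x from two_smul ℂ (p*x),
        show ((2:ℂ) • (x * p)) = x * p + x * p from two_smul ℂ (x*p)]
    exact hl
  exact smul_right_injective A (two_ne_zero) h5

/-- In a unital C*-algebra, with `p` a projection, `e` an effect,
`c` the cosine, `s` the sine, `j = (p(e−e²)p + p⊥(e−e²)p⊥)^{1/2}`, and the
commutator effect `b = (c²s² − j²)^{1/2}` (all square roots encoded by nonnegativity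
together with the defining equation for the square). Then:
(i) `p` commutes with `j` and with `b`;
(ii) `b` is an effect, i.e. `0 ≤ b ≤ 1`;
(iii) `b = |pep⊥ + p⊥ep|`, i.e. `b` is the nonnegative square root of
`(pep⊥ + p⊥ep)²`, expressed by `b² = (pep⊥ + p⊥ep)²` (together with `0 ≤ b`). -/
theorem stmt7 {A : Type*} [CStarAlgebra A] [PartialOrder A] [StarOrderedRing A]
    (p e c s j b : A) (hp : IsSelfAdjoint p) (hp2 : p ^ 2 = p)
    (he0 : 0 ≤ e) (he1 : e ≤ 1)
    (hc0 : 0 ≤ c) (hc2 : c ^ 2 = p * e * p + (1 - p) * (1 - e) * (1 - p))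
    (hs0 : 0 ≤ s) (hs2 : s ^ 2 = p * (1 - e) * p + (1 - p) * e * (1 - p))
    (hj0 : 0 ≤ j)
    (hj2 : j ^ 2 = p * (e - e ^ 2) * p + (1 - p) * (e - e ^ 2) * (1 - p))
    (hb0 : 0 ≤ b) (hb2 : b ^ 2 = c ^ 2 * s ^ 2 - j ^ 2) :
    (p * j = j * p ∧ p * b = b * p) ∧
    (0 ≤ b ∧ b ≤ 1) ∧
    b ^ 2 = (p * e * (1 - p) + (1 - p) * e * p) ^ 2 := by
  have hpp : p * p = p := by rw [← pow_two, hp2]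
  have hpq : p * (1 - p) = 0 := by rw [mul_sub, mul_one, hpp, sub_self]
  have hqp : (1 - p) * p = 0 := by rw [sub_mul, one_mul, hpp, sub_self]
  -- (iii)
  have hiii : b ^ 2 = (p * e * (1 - p) + (1 - p) * e * p) ^ 2 := by
    rw [hb2, hc2, hs2, hj2]; exact stmt7_key p e hpp
  -- generic commutation with elements of the form pXp + qYq
  have hcomm_gen : ∀ X Y : A, p * (p * X * p + (1-p) * Y * (1-p))
      = (p * X * p + (1-p) * Y * (1-p)) * p := by
    intro X Y
    have l1 : p * (p*X*p) = p*X*p := by rw [← mul_assoc, ← mul_assoc, hpp]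
    have l2 : p * ((1-p)*Y*(1-p)) = 0 := by
      rw [← mul_assoc, ← mul_assoc, hpq, zero_mul, zero_mul]
    have r1 : (p*X*p)*p = p*X*p := by rw [mul_assoc, hpp]
    have r2 : ((1-p)*Y*(1-p))*p = 0 := by rw [mul_assoc, hqp, mul_zero]
    rw [mul_add, add_mul, l1, l2, r1, r2, add_zero]
  -- (i) for j
  have hij : p * j = j * p := by
    apply stmt7_comm p j hp hpp hj0
    rw [hj2]; exact hcomm_gen _ _
  -- (i) for b
  have hib : p * b = b * p := by
    apply stmt7_comm p b hp hpp hb0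
    rw [hiii, stmt7_key2 p e hpp]; exact hcomm_gen _ _
  -- (ii): b ≤ 1
  have he_sa : IsSelfAdjoint e := IsSelfAdjoint.of_nonneg he0
  have hp0 : 0 ≤ p := by
    have := star_mul_self_nonneg p
    rwa [hp.star_eq, hpp] at this
  have hqq : (1 - p) * (1 - p) = 1 - p := by rw [mul_sub, mul_one, hqp, sub_zero]
  have hq_sa : IsSelfAdjoint (1 - p : A) := by
    rw [IsSelfAdjoint, star_sub, star_one, hp.star_eq]
  have hq0 : 0 ≤ (1:A) - p := by
    have := star_mul_self_nonneg (1 - p : A)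
    rwa [hq_sa.star_eq, hqq] at this
  have hp1 : p ≤ 1 := sub_nonneg.mp hq0
  have hq1 : (1:A) - p ≤ 1 := sub_le_self 1 hp0
  have hee1 : e * e ≤ 1 := by
    have hee0 : 0 ≤ e * e := by
      have := star_mul_self_nonneg e; rwa [he_sa.star_eq] at this
    rw [← CStarAlgebra.norm_le_one_iff_of_nonneg (e*e) hee0]
    have h1 : ‖e‖ ≤ 1 := (CStarAlgebra.norm_le_one_iff_of_nonneg e he0).mpr he1
    calc ‖e * e‖ ≤ ‖e‖ * ‖e‖ := norm_mul_le e e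
    _ ≤ 1 := by nlinarith [norm_nonneg e]
  have hterm : ∀ r r' : A, IsSelfAdjoint r → r' ≤ 1 → r * r = r →
      r * (e * r' * e) * r ≤ r := by
    intro r r' hr_sa hr'1 hrr
    have h1 : e * r' * e ≤ e * e := by
      have := star_left_conjugate_le_conjugate hr'1 e
      rwa [he_sa.star_eq, mul_one] at this
    have h2 : r * (e * r' * e) * r ≤ r * (e * e) * r := by
      have := star_left_conjugate_le_conjugate h1 r
      rwa [hr_sa.star_eq] at this
    have h3 : r * (e * e) * r ≤ r := by
      have := star_left_conjugate_le_conjugate hee1 r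
      rwa [hr_sa.star_eq, mul_one, hrr] at this
    exact h2.trans h3
  have hb2le : b ^ 2 ≤ 1 := by
    rw [hiii, stmt7_key2 p e hpp]
    have t1 : p * (e * (1-p) * e) * p ≤ p := hterm p (1-p) hp hq1 hpp
    have t2 : (1-p) * (e * p * e) * (1-p) ≤ 1 - p := hterm (1-p) p hq_sa hp1 hqq
    calc p * (e * (1 - p) * e) * p + (1 - p) * (e * p * e) * (1 - p)
        ≤ p + (1 - p) := add_le_add t1 t2
    _ = 1 := by abel
  have hb_sa : IsSelfAdjoint b := IsSelfAdjoint.of_nonneg hb0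
  have hb1 : b ≤ 1 := by
    have hb2_0 : 0 ≤ b ^ 2 := by
      have := star_mul_self_nonneg b
      rwa [hb_sa.star_eq, ← pow_two] at this
    rw [← CStarAlgebra.norm_le_one_iff_of_nonneg b hb0]
    have h1 : ‖b ^ 2‖ ≤ 1 := (CStarAlgebra.norm_le_one_iff_of_nonneg (b^2) hb2_0).mpr hb2le
    have h2 : ‖star b * b‖ = ‖b‖ * ‖b‖ := CStarRing.norm_star_mul_self
    rw [hb_sa.star_eq] at h2
    rw [pow_two, h2] at h1
    nlinarith [norm_nonneg b]
  exact ⟨⟨hij, hib⟩, ⟨hb0, hb1⟩, hiii⟩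
end

section
/- (CBS-decomposition) Let p be a projection and e an effect on a complex Hilbert space H, with cosine c, sine s, off-diagonal part d := pep⊥ + p⊥ep, and b := (d²)^{1/2}. Then there exists a self-adjoint operator k ∈ B(H) with k² = 1 such that: kd = dk, d = bk = kb, e = c²p + bk + s²p⊥, and b(pk − kp⊥) = 0 (equivalently, pbk = pep⊥ and bkp = p⊥ep). -/
/-!
Write `q = 1 - p`. Then `e = pep + d + qeq` with `d = peq + qep`, and `pep = c²p`, `qeq = s²q`,
so everything reduces to a polar decomposition `d = kb = bk` of the self-adjoint operator `d`
with `b = |d|` and `k` a symmetry (a self-adjoint unitary). Since `b² = d²` we have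
`‖bx‖ = ‖dx‖`, so `ker b = ker d`, and both ranges are orthogonal to this kernel. Hence
`bx + v ↦ dx + v` (`v ∈ ker b`) is isometric on the dense subspace `ran b + ker b` and extends
to an isometry `k` of `H`, which is an involution, hence self-adjoint. Finally `p` commutes with
`d² = b²`, hence with `b`, and `pd = dq` gives `b(pk − kq) = pd − dq = 0`.
-/

open ContinuousLinearMap
open scoped InnerProductSpace

theorem LinearMap.norm_extendOfNorm_apply {𝕜 E Eₗ F : Type*} [NontriviallyNormedField 𝕜]
    [AddCommGroup E] [Module 𝕜 E] [NormedAddCommGroup Eₗ] [NormedSpace 𝕜 Eₗ]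
    [NormedAddCommGroup F] [NormedSpace 𝕜 F] [CompleteSpace F]
    {f : E →ₗ[𝕜] F} {e : E →ₗ[𝕜] Eₗ} (h_dense : DenseRange e) (h_norm : ∀ x, ‖f x‖ = ‖e x‖)
    (y : Eₗ) : ‖f.extendOfNorm e y‖ = ‖y‖ := by
  refine h_dense.induction_on y (isClosed_eq (by fun_prop) continuous_norm) fun x => ?_
  rw [extendOfNorm_eq h_dense ⟨1, fun x => (one_mul ‖e x‖).symm ▸ (h_norm x).le⟩, h_norm]

theorem Commute.of_mul_self_right {A : Type*} [CStarAlgebra A] [PartialOrder A]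
    [StarOrderedRing A] {x b : A} (hb : 0 ≤ b) (h : Commute x (b * b)) : Commute x b := by
  rw [← CFC.sqrt_mul_self b hb, CFC.sqrt_eq_cfc]
  exact (h.symm.cfc_nnreal _).symm

section Symmetry

variable {𝕜 E : Type*} [RCLike 𝕜] [NormedAddCommGroup E] [InnerProductSpace 𝕜 E]
  [CompleteSpace E] {b d : E →L[𝕜] E}

theorem IsSelfAdjoint.norm_apply_eq_of_mul_self_eq (hb : IsSelfAdjoint b)
    (hd : IsSelfAdjoint d) (h : b * b = d * d) (x : E) : ‖b x‖ = ‖d x‖ := by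
  have hsq : ∀ a : E →L[𝕜] E, IsSelfAdjoint a → ‖a x‖ ^ 2 = RCLike.re ⟪(a * a) x, x⟫_𝕜 :=
    fun a ha => by rw [apply_norm_sq_eq_inner_adjoint_left, ha.adjoint_eq]; rfl
  rw [← pow_left_inj₀ (norm_nonneg _) (norm_nonneg _) two_ne_zero, hsq b hb, hsq d hd, h]

theorem IsSelfAdjoint.inner_apply_eq_zero_of_apply_eq_zero (hb : IsSelfAdjoint b) (x : E)
    {v : E} (hv : b v = 0) : ⟪b x, v⟫_𝕜 = 0 := by
  rw [← adjoint_inner_right, hb.adjoint_eq, hv, inner_zero_right]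

theorem IsSelfAdjoint.denseRange_coprod_ker (hb : IsSelfAdjoint b) :
    DenseRange ((b : E →ₗ[𝕜] E).coprod b.ker.subtype) := by
  rw [DenseRange, ← LinearMap.coe_range, Submodule.dense_iff_topologicalClosure_eq_top,
    Submodule.topologicalClosure_eq_top_iff, LinearMap.range_coprod, Submodule.range_subtype,
    ← Submodule.inf_orthogonal, orthogonal_range, hb.adjoint_eq, Submodule.inf_orthogonal_eq_bot]

theorem IsSelfAdjoint.apply_eq_zero_of_mul_self_eq (hb : IsSelfAdjoint b)
    (hd : IsSelfAdjoint d) (h : b * b = d * d) {v : E} (hv : b v = 0) : d v = 0 := by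
  rw [← norm_eq_zero, ← hb.norm_apply_eq_of_mul_self_eq hd h, hv, norm_zero]

theorem IsSelfAdjoint.ext_of_apply_add_eq (hb : IsSelfAdjoint b) {S T : E →L[𝕜] E}
    (h : ∀ x v, b v = 0 → S (b x + v) = T (b x + v)) : S = T :=
  DFunLike.coe_injective <| hb.denseRange_coprod_ker.equalizer S.continuous T.continuous <|
    funext fun ⟨x, v, hv⟩ => h x v hv

theorem IsSelfAdjoint.exists_isometry_apply_add_eq (hb : IsSelfAdjoint b)
    (hd : IsSelfAdjoint d) (hbd : b * b = d * d) :
    ∃ k : E →L[𝕜] E, (∀ y, ‖k y‖ = ‖y‖) ∧ ∀ x v, b v = 0 → k (b x + v) = d x + v := by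
  set ψ := (b : E →ₗ[𝕜] E).coprod b.ker.subtype
  set g := (d : E →ₗ[𝕜] E).coprod b.ker.subtype
  have hnorm : ∀ w, ‖g w‖ = ‖ψ w‖ := by
    rintro ⟨x, v, hv⟩
    show ‖d x + v‖ = ‖b x + v‖
    rw [← mul_self_inj (norm_nonneg _) (norm_nonneg _),
      norm_add_sq_eq_norm_sq_add_norm_sq_of_inner_eq_zero _ _
        (hd.inner_apply_eq_zero_of_apply_eq_zero x (hb.apply_eq_zero_of_mul_self_eq hd hbd hv)),
      norm_add_sq_eq_norm_sq_add_norm_sq_of_inner_eq_zero _ _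
        (hb.inner_apply_eq_zero_of_apply_eq_zero x hv), hb.norm_apply_eq_of_mul_self_eq hd hbd]
  refine ⟨g.extendOfNorm ψ, LinearMap.norm_extendOfNorm_apply hb.denseRange_coprod_ker hnorm,
    fun x v hv => ?_⟩
  exact LinearMap.extendOfNorm_eq hb.denseRange_coprod_ker
    ⟨1, fun w => (one_mul ‖ψ w‖).symm ▸ (hnorm w).le⟩ (x, ⟨v, hv⟩)

theorem IsSelfAdjoint.exists_symmetry_mul_eq (hb : IsSelfAdjoint b)
    (hd : IsSelfAdjoint d) (hbd : b * b = d * d) (hcomm : Commute b d) :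
    ∃ k : E →L[𝕜] E, IsSelfAdjoint k ∧ k ^ 2 = 1 ∧ k * b = d ∧ b * k = d := by
  obtain ⟨k, hk_norm, hk⟩ := hb.exists_isometry_apply_add_eq hd hbd
  have hker : ∀ {v}, b v = 0 → d v = 0 := hb.apply_eq_zero_of_mul_self_eq hd hbd
  have hkN : ∀ v, b v = 0 → k v = v := fun v hv => by simpa using hk 0 v hv
  have hkb : k * b = d := ext fun x => by simpa using hk x 0 (map_zero b)
  have hkd : k * d = b := hb.ext_of_apply_add_eq fun x v hv => by
    show k (d (b x + v)) = b (b x + v)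
    simp only [map_add, hker hv, hv, add_zero]
    calc k (d (b x)) = (k * b * d) x := by rw [mul_assoc, hcomm.eq]; rfl
      _ = (b * b) x := by rw [hkb, hbd]
  have hkk : k * k = 1 := hb.ext_of_apply_add_eq fun x v hv => by
    show k (k (b x + v)) = b x + v
    rw [hk x v hv, map_add, hkN v hv]
    exact congrArg (· + v) (DFunLike.congr_fun hkd x)
  have hbk : b * k = d := hb.ext_of_apply_add_eq fun x v hv => by
    show b (k (b x + v)) = d (b x + v)
    simp only [hk x v hv, map_add, hv, hker hv, add_zero]
    exact DFunLike.congr_fun hcomm.eq x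
  have hk_adj : adjoint k * k = 1 := (norm_map_iff_adjoint_comp_self k).mp hk_norm
  refine ⟨k, ?_, by rw [sq, hkk], hkb, hbk⟩
  calc star k = adjoint k * (k * k) := by rw [hkk, mul_one]; rfl
    _ = k := by rw [← mul_assoc, hk_adj, one_mul]

end Symmetry

section OffDiagonal

variable {R : Type*} [Ring R]

def offDiag (p e : R) : R := p * e * (1 - p) + (1 - p) * e * p

theorem offDiag_one_sub (p e : R) : offDiag (1 - p) e = offDiag p e := by
  rw [offDiag, offDiag, sub_sub_cancel, add_comm]

theorem IsSelfAdjoint.offDiag [StarRing R] {p e : R} (hp : IsSelfAdjoint p)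
    (he : IsSelfAdjoint e) : IsSelfAdjoint (_root_.offDiag p e) := by
  simp only [IsSelfAdjoint, _root_.offDiag, star_add, star_mul, star_sub, star_one, hp.star_eq,
    he.star_eq, ← mul_assoc]
  exact add_comm _ _

variable {p : R}

theorem IsIdempotentElem.mul_offDiag (hp : IsIdempotentElem p) (e : R) :
    p * offDiag p e = offDiag p e * (1 - p) := by
  have hpd : p * offDiag p e = p * e * (1 - p) := by
    simp only [offDiag, mul_add, ← mul_assoc, hp.eq, hp.mul_one_sub_self, zero_mul, add_zero]
  have hdq : offDiag p e * (1 - p) = p * e * (1 - p) := by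
    simp only [offDiag, add_mul, mul_assoc, hp.one_sub.eq, hp.mul_one_sub_self, mul_zero,
      add_zero]
  rw [hpd, hdq]

theorem IsIdempotentElem.commute_offDiag_mul_self (hp : IsIdempotentElem p) (e : R) :
    Commute p (offDiag p e * offDiag p e) := by
  have hqd := hp.one_sub.mul_offDiag e
  rw [offDiag_one_sub, sub_sub_cancel] at hqd
  calc p * (offDiag p e * offDiag p e) = offDiag p e * ((1 - p) * offDiag p e) := by
        rw [← mul_assoc, hp.mul_offDiag, mul_assoc]
    _ = offDiag p e * offDiag p e * p := by rw [hqd, mul_assoc]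

theorem IsIdempotentElem.eq_diag_add_offDiag (hp : IsIdempotentElem p) (e : R) :
    e = (p * e * p + (1 - p) * (1 - e) * (1 - p)) * p + offDiag p e +
      (p * (1 - e) * p + (1 - p) * e * (1 - p)) * (1 - p) := by
  have hc : (p * e * p + (1 - p) * (1 - e) * (1 - p)) * p = p * e * p := by
    simp only [add_mul, mul_assoc, hp.eq, hp.one_sub_mul_self, mul_zero, add_zero]
  have hs : (p * (1 - e) * p + (1 - p) * e * (1 - p)) * (1 - p) = (1 - p) * e * (1 - p) := by
    simp only [add_mul, mul_assoc, hp.one_sub.eq, hp.mul_one_sub_self, mul_zero, zero_add]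
  rw [hc, hs, offDiag]
  noncomm_ring

end OffDiagonal

theorem stmt8_general {H : Type*} [NormedAddCommGroup H] [InnerProductSpace ℂ H] [CompleteSpace H]
    (p e c s b : H →L[ℂ] H)
    (hp : IsSelfAdjoint p) (hp2 : p ^ 2 = p)
    (he0 : 0 ≤ e)
    (hc2 : c ^ 2 = p * e * p + (1 - p) * (1 - e) * (1 - p))
    (hs2 : s ^ 2 = p * (1 - e) * p + (1 - p) * e * (1 - p))
    (hb0 : 0 ≤ b) (hb2 : b ^ 2 = (p * e * (1 - p) + (1 - p) * e * p) ^ 2) :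
    ∃ k : H →L[ℂ] H, IsSelfAdjoint k ∧ k ^ 2 = 1 ∧
      k * (p * e * (1 - p) + (1 - p) * e * p) = (p * e * (1 - p) + (1 - p) * e * p) * k ∧
      p * e * (1 - p) + (1 - p) * e * p = b * k ∧
      p * e * (1 - p) + (1 - p) * e * p = k * b ∧
      e = c ^ 2 * p + b * k + s ^ 2 * (1 - p) ∧
      b * (p * k - k * (1 - p)) = 0 := by
  have hpi : IsIdempotentElem p := by rw [IsIdempotentElem, ← sq, hp2]
  have hbd : b * b = offDiag p e * offDiag p e := by rw [← sq, hb2, sq]; rfl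
  have hdb : Commute b (offDiag p e) := by
    refine (Commute.of_mul_self_right hb0 ?_).symm
    rw [hbd]
    exact (Commute.refl _).mul_right (Commute.refl _)
  obtain ⟨k, hk, hk2, hkb, hbk⟩ :=
    (IsSelfAdjoint.of_nonneg hb0).exists_symmetry_mul_eq (hp.offDiag (.of_nonneg he0)) hbd hdb
  have hpb : Commute p b := .of_mul_self_right hb0 (hbd ▸ hpi.commute_offDiag_mul_self e)
  refine ⟨k, hk, hk2, ?_, hbk.symm, hkb.symm, ?_, ?_⟩
  · calc k * offDiag p e = k * b * k := by rw [mul_assoc, hbk]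
      _ = offDiag p e * k := by rw [hkb]
  · rw [hbk, hc2, hs2]
    exact hpi.eq_diag_add_offDiag e
  · calc b * (p * k - k * (1 - p)) = p * (b * k) - b * k * (1 - p) := by
          rw [mul_sub, ← mul_assoc, ← hpb.eq, mul_assoc, mul_assoc]
      _ = 0 := by rw [hbk, hpi.mul_offDiag, sub_self]

/-- **CBS-decomposition.** In `B(H)` with the Loewner order, let `p` be a
projection, `e` an effect, `c` the cosine and `s` the sine of `e` with respect to `p`
(encoded as the nonnegative square roots of `pep + p⊥e⊥p⊥` and `pe⊥p + p⊥ep⊥`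
respectively), let `d := pep⊥ + p⊥ep` be the off-diagonal part and `b := (d²)^{1/2}`.
Then there exists a self-adjoint `k` with `k² = 1` such that `kd = dk`, `d = bk = kb`,
`e = c²p + bk + s²p⊥`, and `b(pk − kp⊥) = 0`. -/
theorem stmt8 {H : Type*} [NormedAddCommGroup H] [InnerProductSpace ℂ H] [CompleteSpace H]
    (p e c s b : H →L[ℂ] H)
    (hp : IsSelfAdjoint p) (hp2 : p ^ 2 = p)
    (he0 : 0 ≤ e) (he1 : e ≤ 1)
    (hc0 : 0 ≤ c) (hc2 : c ^ 2 = p * e * p + (1 - p) * (1 - e) * (1 - p))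
    (hs0 : 0 ≤ s) (hs2 : s ^ 2 = p * (1 - e) * p + (1 - p) * e * (1 - p))
    (hb0 : 0 ≤ b) (hb2 : b ^ 2 = (p * e * (1 - p) + (1 - p) * e * p) ^ 2) :
    ∃ k : H →L[ℂ] H, IsSelfAdjoint k ∧ k ^ 2 = 1 ∧
      k * (p * e * (1 - p) + (1 - p) * e * p) = (p * e * (1 - p) + (1 - p) * e * p) * k ∧
      p * e * (1 - p) + (1 - p) * e * p = b * k ∧
      p * e * (1 - p) + (1 - p) * e * p = k * b ∧
      e = c ^ 2 * p + b * k + s ^ 2 * (1 - p) ∧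
      b * (p * k - k * (1 - p)) = 0 :=
  stmt8_general p e c s b hp hp2 he0 hc2 hs2 hb0 hb2
end

section
/- Let p be a projection and e an effect, with cosine c, sine s, j := (p(e−e²)p + p⊥(e−e²)p⊥)^{1/2}, and commutator effect b := (c²s² − j²)^{1/2}. Then the following are mutually equivalent: (i) e is a projection (e² = e); (ii) j = 0; (iii) b = cs. -/
/-!
Since `p` is a projection, `c² + s² = 1`, so `s = √(1 - c²)` commutes with `c`; hence `cs ≥ 0` and
`(cs)² = c²s²`. By uniqueness of nonnegative square roots, `b = cs` iff `j² = 0` iff `j = 0`. Finally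
`e - e² = e(1 - e) ≥ 0`, and a nonnegative `x` with `pxp + p⊥xp⊥ = 0` vanishes: writing
`pxp = (√x p)⋆(√x p)`, the C*-identity gives `√x p = 0`, so `xp = 0`, and likewise `xp⊥ = 0`.
-/

lemma IsIdempotentElem.conj_add_conj_one_sub_add_eq_one {R : Type*} [Ring R] {p : R}
    (hp : IsIdempotentElem p) (e : R) :
    p * e * p + (1 - p) * (1 - e) * (1 - p) + (p * (1 - e) * p + (1 - p) * e * (1 - p)) = 1 := by
  have expand : p * e * p + (1 - p) * (1 - e) * (1 - p) + (p * (1 - e) * p + (1 - p) * e * (1 - p))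
      = 1 - 2 * p + 2 * (p * p) := by noncomm_ring
  rw [expand, hp.eq]
  abel

section CStarAlgebra

variable {A : Type*} [CStarAlgebra A] [PartialOrder A] [StarOrderedRing A]

lemma sq_eq_zero_iff_of_nonneg {x : A} (hx : 0 ≤ x) : x ^ 2 = 0 ↔ x = 0 := by
  simpa using CFC.sq_eq_sq_iff x 0 hx le_rfl

lemma sub_sq_nonneg_of_le_one {e : A} (he0 : 0 ≤ e) (he1 : e ≤ 1) : 0 ≤ e - e ^ 2 := by
  have h : 0 ≤ e * (1 - e) :=
    ((Commute.one_right e).sub_right (Commute.refl e)).mul_nonneg he0 (sub_nonneg.2 he1)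
  rwa [mul_sub, mul_one, ← sq] at h

lemma commute_of_sq_add_sq_eq_one {c s : A} (hs : 0 ≤ s) (h : c ^ 2 + s ^ 2 = 1) :
    Commute c s := by
  have hs2 : s ^ 2 = 1 - c ^ 2 := eq_sub_of_add_eq' h
  have hcomm : Commute (s ^ 2) c := hs2 ▸ (Commute.one_left c).sub_left (Commute.pow_self c 2)
  rw [← CFC.sqrt_sq s hs, CFC.sqrt_eq_cfc]
  exact (hcomm.cfc_nnreal _).symm

lemma mul_eq_zero_of_conj_eq_zero {x p : A} (hx : 0 ≤ x) (hp : IsSelfAdjoint p)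
    (h : p * x * p = 0) : x * p = 0 := by
  obtain ⟨r, hr_sa, hr⟩ : ∃ r : A, IsSelfAdjoint r ∧ r * r = x :=
    ⟨CFC.sqrt x, .of_nonneg (CFC.sqrt_nonneg x), CFC.sqrt_mul_sqrt_self x hx⟩
  have hrp : star (r * p) * (r * p) = p * x * p := by
    rw [star_mul, hr_sa.star_eq, hp.star_eq, ← hr]
    simp only [mul_assoc]
  have hrp0 : r * p = 0 := by rw [← CStarRing.star_mul_self_eq_zero_iff, hrp, h]
  rw [← hr, mul_assoc, hrp0, mul_zero]

lemma eq_zero_of_conj_add_conj_one_sub_eq_zero {x p : A} (hx : 0 ≤ x) (hp : IsSelfAdjoint p)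
    (h : p * x * p + (1 - p) * x * (1 - p) = 0) : x = 0 := by
  have hq : IsSelfAdjoint (1 - p) := .sub (.one A) hp
  obtain ⟨hxp, hxq⟩ :=
    (add_eq_zero_iff_of_nonneg (hp.conjugate_nonneg hx) (hq.conjugate_nonneg hx)).1 h
  calc x = x * p + x * (1 - p) := by rw [← mul_add, add_sub_cancel, mul_one]
    _ = 0 := by
      rw [mul_eq_zero_of_conj_eq_zero hx hp hxp, mul_eq_zero_of_conj_eq_zero hx hq hxq, add_zero]

end CStarAlgebra

/-- In a unital C*-algebra, with `p` a projection, `e` an effect,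
`c` the cosine, `s` the sine, `j = (p(e−e²)p + p⊥(e−e²)p⊥)^{1/2}`, and the commutator
effect `b = (c²s² − j²)^{1/2}` (all square roots encoded by nonnegativity plus the
defining equation), the following are equivalent:
(i) `e` is a projection (`e² = e`); (ii) `j = 0`; (iii) `b = cs`. -/
theorem stmt9 {A : Type*} [CStarAlgebra A] [PartialOrder A] [StarOrderedRing A]
    (p e c s j b : A) (hp : IsSelfAdjoint p) (hp2 : p ^ 2 = p)
    (he0 : 0 ≤ e) (he1 : e ≤ 1)
    (hc0 : 0 ≤ c) (hc2 : c ^ 2 = p * e * p + (1 - p) * (1 - e) * (1 - p))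
    (hs0 : 0 ≤ s) (hs2 : s ^ 2 = p * (1 - e) * p + (1 - p) * e * (1 - p))
    (hj0 : 0 ≤ j)
    (hj2 : j ^ 2 = p * (e - e ^ 2) * p + (1 - p) * (e - e ^ 2) * (1 - p))
    (hb0 : 0 ≤ b) (hb2 : b ^ 2 = c ^ 2 * s ^ 2 - j ^ 2) :
    List.TFAE [e ^ 2 = e, j = 0, b = c * s] := by
  have hp' : IsIdempotentElem p := by rw [IsIdempotentElem, ← sq, hp2]
  have hcs : Commute c s := commute_of_sq_add_sq_eq_one hs0 <| by
    rw [hc2, hs2, hp'.conj_add_conj_one_sub_add_eq_one]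
  tfae_have 1 ↔ 2 := by
    rw [← sq_eq_zero_iff_of_nonneg hj0, hj2, eq_comm, ← sub_eq_zero (a := e) (b := e ^ 2)]
    constructor
    · intro h
      simp [h]
    · exact eq_zero_of_conj_add_conj_one_sub_eq_zero (sub_sq_nonneg_of_le_one he0 he1) hp
  tfae_have 2 ↔ 3 := by
    rw [← CFC.sq_eq_sq_iff b (c * s) hb0 (hcs.mul_nonneg hc0 hs0), hb2, hcs.mul_pow,
      sub_eq_self, sq_eq_zero_iff_of_nonneg hj0]
  tfae_finish
end

section
/- Let p be a projection and e an effect, with cosine c, sine s, j := (p(e−e²)p + p⊥(e−e²)p⊥)^{1/2}, and commutator effect b := (c²s² − j²)^{1/2}. Then the following are mutually equivalent: (i) pe = ep; (ii) b = 0; (iii) cs = j; (iv) e = c²p + s²p⊥. -/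
/-!
Let `x := p e p⊥` be the off-diagonal corner of `e` with respect to `p`; as `e` is self-adjoint,
the other corner `p⊥ e p` is `x⋆`. Every condition reduces to `x = 0`: `pe − ep = x − x⋆`,
`e − (pep + p⊥ep⊥) = x + x⋆`, and `c²s² − j² = x x⋆ + x⋆ x`, which by the C⋆-identity vanishes
only when `x` does. For (iii), `s² = 1 − c²` makes `c` and `s` commute, so `cs ≥ 0` and
`cs = j` iff `c²s² = j²`.
-/

section Ring

variable {R : Type*} [Ring R]

def blockDiag (p a b : R) : R := p * a * p + (1 - p) * b * (1 - p)

lemma mul_sub_mul_eq_corner_sub_corner (p e : R) :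
    p * e - e * p = p * e * (1 - p) - (1 - p) * e * p := by
  noncomm_ring

lemma sub_blockDiag_self (p e : R) :
    e - blockDiag p e e = p * e * (1 - p) + (1 - p) * e * p := by
  unfold blockDiag
  noncomm_ring

namespace IsIdempotentElem

variable {p : R}

lemma mul_corner_add_corner_mul (hp : IsIdempotentElem p) (e : R) :
    p * (p * e * (1 - p) + (1 - p) * e * p) * (1 - p) = p * e * (1 - p) := by
  simp only [mul_add, add_mul, mul_assoc, hp.one_sub.eq, hp.mul_one_sub_self, mul_zero, add_zero,
    hp.mul_self_mul]

lemma commute_iff_corners_eq_zero (hp : IsIdempotentElem p) (e : R) :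
    p * e = e * p ↔ p * e * (1 - p) = 0 ∧ (1 - p) * e * p = 0 := by
  constructor
  · intro h
    constructor
    · rw [h, mul_assoc, hp.mul_one_sub_self, mul_zero]
    · rw [mul_assoc, ← h, ← mul_assoc, hp.one_sub_mul_self, zero_mul]
  · rintro ⟨h₁, h₂⟩
    rw [← sub_eq_zero, mul_sub_mul_eq_corner_sub_corner, h₁, h₂, sub_zero]

lemma eq_blockDiag_self_iff_commute (hp : IsIdempotentElem p) (e : R) :
    e = blockDiag p e e ↔ p * e = e * p := by
  rw [hp.commute_iff_corners_eq_zero, ← sub_eq_zero, sub_blockDiag_self]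
  refine ⟨fun h ↦ ⟨?_, ?_⟩, fun ⟨h₁, h₂⟩ ↦ by rw [h₁, h₂, add_zero]⟩
  · simpa [h] using (hp.mul_corner_add_corner_mul e).symm
  · have := hp.one_sub.mul_corner_add_corner_mul e
    rw [sub_sub_cancel, add_comm, h] at this
    simpa using this.symm

lemma blockDiag_mul_self (hp : IsIdempotentElem p) (a b : R) :
    blockDiag p a b * p = p * a * p := by
  rw [blockDiag, add_mul, mul_assoc _ (1 - p), hp.one_sub_mul_self, mul_zero, add_zero,
    mul_assoc _ p, hp.eq]

lemma blockDiag_mul_one_sub_self (hp : IsIdempotentElem p) (a b : R) :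
    blockDiag p a b * (1 - p) = (1 - p) * b * (1 - p) := by
  simpa [blockDiag, add_comm] using hp.one_sub.blockDiag_mul_self b a

lemma blockDiag_add_blockDiag_swap (hp : IsIdempotentElem p) (e : R) :
    blockDiag p e (1 - e) + blockDiag p (1 - e) e = 1 := by
  simp only [blockDiag, mul_sub, sub_mul, mul_one, one_mul, mul_assoc, hp.eq]
  abel

lemma blockDiag_mul_blockDiag_swap_sub (hp : IsIdempotentElem p) (e : R) :
    blockDiag p e (1 - e) * blockDiag p (1 - e) e - blockDiag p (e - e ^ 2) (e - e ^ 2)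
      = p * e * (1 - p) * ((1 - p) * e * p) + (1 - p) * e * p * (p * e * (1 - p)) := by
  simp only [blockDiag, mul_sub, sub_mul, mul_add, add_mul, mul_one, one_mul, mul_assoc,
    hp.mul_self_mul, hp.eq, sq]
  abel

end IsIdempotentElem

end Ring

lemma IsSelfAdjoint.sq_eq_zero_iff {E : Type*} [NormedRing E] [StarRing E] [CStarRing E] {b : E}
    (hb : IsSelfAdjoint b) : b ^ 2 = 0 ↔ b = 0 := by
  simpa only [sq, hb.star_eq] using CStarRing.star_mul_self_eq_zero_iff b

lemma mul_star_add_star_mul_eq_zero_iff {E : Type*} [NonUnitalNormedRing E] [StarRing E]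
    [CStarRing E] [PartialOrder E] [StarOrderedRing E] (x : E) :
    x * star x + star x * x = 0 ↔ x = 0 := by
  refine ⟨fun h ↦ ?_, fun h ↦ by simp [h]⟩
  have h_le : star x * x ≤ 0 := by
    rw [eq_neg_of_add_eq_zero_right h, neg_nonpos]
    exact mul_star_self_nonneg x
  exact (CStarRing.star_mul_self_eq_zero_iff x).mp (le_antisymm h_le (star_mul_self_nonneg x))

lemma Commute.of_sq_right {A : Type*} [CStarAlgebra A] [PartialOrder A] [StarOrderedRing A]
    {a s : A} (hs : 0 ≤ s) (h : Commute a (s ^ 2)) : Commute a s := by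
  rw [← CFC.sqrt_sq s, CFC.sqrt_eq_cfc]
  exact (h.symm.cfc_nnreal _).symm

theorem stmt10_general {A : Type*} [CStarAlgebra A] [PartialOrder A] [StarOrderedRing A]
    (p e c s j b : A) (hp : IsSelfAdjoint p) (hp2 : p ^ 2 = p)
    (he0 : 0 ≤ e)
    (hc0 : 0 ≤ c) (hc2 : c ^ 2 = p * e * p + (1 - p) * (1 - e) * (1 - p))
    (hs0 : 0 ≤ s) (hs2 : s ^ 2 = p * (1 - e) * p + (1 - p) * e * (1 - p))
    (hj0 : 0 ≤ j)
    (hj2 : j ^ 2 = p * (e - e ^ 2) * p + (1 - p) * (e - e ^ 2) * (1 - p))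
    (hb0 : 0 ≤ b) (hb2 : b ^ 2 = c ^ 2 * s ^ 2 - j ^ 2) :
    List.TFAE [p * e = e * p, b = 0, c * s = j, e = c ^ 2 * p + s ^ 2 * (1 - p)] := by
  have hp' : IsIdempotentElem p := (sq p).symm.trans hp2
  have hc2' : c ^ 2 = blockDiag p e (1 - e) := hc2
  have hs2' : s ^ 2 = blockDiag p (1 - e) e := hs2
  have hj2' : j ^ 2 = blockDiag p (e - e ^ 2) (e - e ^ 2) := hj2
  have h_star : star (p * e * (1 - p)) = (1 - p) * e * p := by
    simp [mul_assoc, hp.star_eq, he0.isSelfAdjoint.star_eq]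
  have h_cs : Commute c s := Commute.of_sq_right hs0 <| by
    rw [hs2', eq_sub_of_add_eq' (hp'.blockDiag_add_blockDiag_swap e), ← hc2']
    exact (Commute.one_right c).sub_right ((Commute.refl c).pow_right 2)
  tfae_have 1 ↔ 2 := by
    rw [hp'.commute_iff_corners_eq_zero, ← h_star, star_eq_zero, and_self,
      ← mul_star_add_star_mul_eq_zero_iff, h_star, ← hp'.blockDiag_mul_blockDiag_swap_sub,
      ← hc2', ← hs2', ← hj2', ← hb2, hb0.isSelfAdjoint.sq_eq_zero_iff]
  tfae_have 3 ↔ 2 := by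
    rw [← CFC.sq_eq_sq_iff (c * s) j (h_cs.mul_nonneg hc0 hs0) hj0, h_cs.mul_pow,
      ← sub_eq_zero, ← hb2, hb0.isSelfAdjoint.sq_eq_zero_iff]
  tfae_have 4 ↔ 1 := by
    rw [hc2', hs2', hp'.blockDiag_mul_self, hp'.blockDiag_mul_one_sub_self]
    exact hp'.eq_blockDiag_self_iff_commute e
  tfae_finish

/-- In a unital C*-algebra, with `p` a projection, `e` an effect,
`c` the cosine, `s` the sine, `j = (p(e−e²)p + p⊥(e−e²)p⊥)^{1/2}`, and the commutator
effect `b = (c²s² − j²)^{1/2}` (all square roots encoded by nonnegativity plus the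
defining equation), the following are equivalent:
(i) `pe = ep`; (ii) `b = 0`; (iii) `cs = j`; (iv) `e = c²p + s²p⊥`. -/
theorem stmt10 {A : Type*} [CStarAlgebra A] [PartialOrder A] [StarOrderedRing A]
    (p e c s j b : A) (hp : IsSelfAdjoint p) (hp2 : p ^ 2 = p)
    (he0 : 0 ≤ e) (he1 : e ≤ 1)
    (hc0 : 0 ≤ c) (hc2 : c ^ 2 = p * e * p + (1 - p) * (1 - e) * (1 - p))
    (hs0 : 0 ≤ s) (hs2 : s ^ 2 = p * (1 - e) * p + (1 - p) * e * (1 - p))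
    (hj0 : 0 ≤ j)
    (hj2 : j ^ 2 = p * (e - e ^ 2) * p + (1 - p) * (e - e ^ 2) * (1 - p))
    (hb0 : 0 ≤ b) (hb2 : b ^ 2 = c ^ 2 * s ^ 2 - j ^ 2) :
    List.TFAE [p * e = e * p, b = 0, c * s = j, e = c ^ 2 * p + s ^ 2 * (1 - p)] :=
  stmt10_general p e c s j b hp hp2 he0 hc0 hc2 hs0 hs2 hj0 hj2 hb0 hb2
end

section
/- Let p be a projection, e an effect, and q a projection with qp = pq and qe = eq. Let c, s, b be the cosine, sine, and commutator effects of e with respect to p. Then: (i) q commutes with c, with s, with j := (p(e−e²)p + p⊥(e−e²)p⊥)^{1/2}, and with b; (ii) the cosine, sine, and commutator effects of the component eq with respect to the projection pq computed in the corner algebra qAq are the components of c, s, b: namely (q(pep + p⊥e⊥p⊥))^{1/2} = qc, (q(pe⊥p + p⊥ep⊥))^{1/2} = qs, and ((q(pep⊥ + p⊥ep))²)^{1/2} = qb. -/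
lemma commute_of_commute_sq' {A : Type*} [CStarAlgebra A] [PartialOrder A]
    [StarOrderedRing A] {q c : A} (hq : IsSelfAdjoint q) (hq2 : q ^ 2 = q)
    (hc0 : 0 ≤ c) (h : q * c ^ 2 = c ^ 2 * q) : q * c = c * q := by
  set u : A := 2 • q - 1 with hu
  have hqq : q * q = q := by simpa [sq] using hq2
  have hcc : c * c = c ^ 2 := (sq c).symm
  have huu : u * u = 1 := by
    simp only [hu, two_smul, sub_mul, mul_sub, add_mul, mul_add, hqq, one_mul, mul_one]
    abel
  have hus : IsSelfAdjoint u := by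
    simp only [hu, IsSelfAdjoint, star_sub, star_nsmul, hq.star_eq, star_one]
  have hucom : u * c ^ 2 = c ^ 2 * u := by
    simp only [hu, two_smul, sub_mul, mul_sub, add_mul, mul_add, h, one_mul, mul_one]
  have h1 : (u * c * u) * (u * c * u) = c ^ 2 := by
    calc (u * c * u) * (u * c * u) = u * c * (u * u) * c * u := by noncomm_ring
    _ = u * (c * c) * u := by rw [huu]; noncomm_ring
    _ = u * c ^ 2 * u := by rw [hcc]
    _ = c ^ 2 * (u * u) := by rw [hucom]; noncomm_ring
    _ = c ^ 2 := by rw [huu, mul_one]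
  have h2 : 0 ≤ u * c * u := hus.conjugate_nonneg hc0
  have h3 : u * c * u = c := by
    have e1 : CFC.sqrt (c ^ 2) = u * c * u := CFC.sqrt_unique h1 h2
    have e2 : CFC.sqrt (c ^ 2) = c := CFC.sqrt_unique hcc hc0
    rw [← e1, e2]
  have h4 : u * c = c * u := by
    have := congrArg (· * u) h3
    simpa only [mul_assoc, huu, mul_one] using this
  have h5 : q * c + q * c = c * q + c * q := by
    have := h4
    simp only [hu, two_smul, sub_mul, mul_sub, add_mul, mul_add, one_mul, mul_one] at this
    have := congrArg (· + c) this
    simpa [sub_add_cancel] using this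
  have h6 : (q * c - c * q) + (q * c - c * q) = 0 := by
    rw [sub_add_sub_comm, sub_eq_zero]; exact h5
  have h7 : (2 : ℂ) • (q * c - c * q) = 0 := by rw [two_smul]; exact h6
  have h8 := (smul_eq_zero.mp h7).resolve_left (by norm_num)
  exact sub_eq_zero.mp h8

lemma proj_mul_sq' {A : Type*} [Ring A] {q x : A} (hqq : q * q = q)
    (hqx : q * x = x * q) : (q * x) ^ 2 = q * x ^ 2 := by
  calc (q * x) ^ 2 = q * (x * q) * x := by noncomm_ring
  _ = q * (q * x) * x := by rw [hqx]
  _ = q * q * (x * x) := by noncomm_ring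
  _ = q * x ^ 2 := by rw [hqq, sq]

lemma proj_mul_nonneg' {A : Type*} [Ring A] [PartialOrder A] [StarRing A]
    [StarOrderedRing A] {q x : A} (hq : IsSelfAdjoint q) (hqq : q * q = q)
    (hx0 : 0 ≤ x) (hqx : q * x = x * q) : 0 ≤ q * x := by
  have h1 : q * x * q = q * x := by rw [mul_assoc, ← hqx, ← mul_assoc, hqq]
  have h2 : 0 ≤ star q * x * q := star_left_conjugate_nonneg hx0 q
  rwa [hq.star_eq, h1] at h2

/-- In a unital C*-algebra, let `p` be a projection, `e` an effect,
and `q` a projection commuting with `p` and with `e`.  Let `c`, `s`, `j`, `b` be the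
cosine, sine, `j`, and commutator effects of `e` with respect to `p` (encoded as
nonnegative square roots via the defining equations for their squares). Then:
(i) `q` commutes with `c`, `s`, `j`, and `b`;
(ii) the cosine, sine, and commutator effects of `eq` with respect to `pq` in the
corner algebra `qAq` are `qc`, `qs`, `qb`; i.e. `qc` is the nonnegative square root of
`q(pep + p⊥e⊥p⊥)`, `qs` is the nonnegative square root of `q(pe⊥p + p⊥ep⊥)`, and
`qb` is the nonnegative square root of `(q(pep⊥ + p⊥ep))²`. -/
theorem stmt11 {A : Type*} [CStarAlgebra A] [PartialOrder A] [StarOrderedRing A]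
    (p e c s j b q : A) (hp : IsSelfAdjoint p) (hp2 : p ^ 2 = p)
    (he0 : 0 ≤ e) (he1 : e ≤ 1)
    (hc0 : 0 ≤ c) (hc2 : c ^ 2 = p * e * p + (1 - p) * (1 - e) * (1 - p))
    (hs0 : 0 ≤ s) (hs2 : s ^ 2 = p * (1 - e) * p + (1 - p) * e * (1 - p))
    (hj0 : 0 ≤ j)
    (hj2 : j ^ 2 = p * (e - e ^ 2) * p + (1 - p) * (e - e ^ 2) * (1 - p))
    (hb0 : 0 ≤ b) (hb2 : b ^ 2 = c ^ 2 * s ^ 2 - j ^ 2)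
    (hq : IsSelfAdjoint q) (hq2 : q ^ 2 = q)
    (hqp : q * p = p * q) (hqe : q * e = e * q) :
    (q * c = c * q ∧ q * s = s * q ∧ q * j = j * q ∧ q * b = b * q) ∧
    (0 ≤ q * c ∧ (q * c) ^ 2 = q * (p * e * p + (1 - p) * (1 - e) * (1 - p))) ∧
    (0 ≤ q * s ∧ (q * s) ^ 2 = q * (p * (1 - e) * p + (1 - p) * e * (1 - p))) ∧
    (0 ≤ q * b ∧ (q * b) ^ 2 = (q * (p * e * (1 - p) + (1 - p) * e * p)) ^ 2) := by
  have hpp : p * p = p := by simpa [sq] using hp2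
  have hqq : q * q = q := by simpa [sq] using hq2
  have Cp : Commute q p := hqp
  have Ce : Commute q e := hqe
  have Cp' : Commute q (1 - p) := (Commute.one_right q).sub_right Cp
  have Ce' : Commute q (1 - e) := (Commute.one_right q).sub_right Ce
  have Ce2 : Commute q (e - e ^ 2) := Ce.sub_right (Ce.pow_right 2)
  have Cc2 : q * c ^ 2 = c ^ 2 * q := by
    rw [hc2]
    exact (((Cp.mul_right Ce).mul_right Cp).add_right
      ((Cp'.mul_right Ce').mul_right Cp')).eq
  have Cs2 : q * s ^ 2 = s ^ 2 * q := by
    rw [hs2]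
    exact (((Cp.mul_right Ce').mul_right Cp).add_right
      ((Cp'.mul_right Ce).mul_right Cp')).eq
  have Cj2 : q * j ^ 2 = j ^ 2 * q := by
    rw [hj2]
    exact (((Cp.mul_right Ce2).mul_right Cp).add_right
      ((Cp'.mul_right Ce2).mul_right Cp')).eq
  have Cb2 : q * b ^ 2 = b ^ 2 * q := by
    rw [hb2]
    have c1 : Commute q (c ^ 2) := Cc2
    have c2 : Commute q (s ^ 2) := Cs2
    have c3 : Commute q (j ^ 2) := Cj2
    exact ((c1.mul_right c2).sub_right c3).eq
  have hqc : q * c = c * q := commute_of_commute_sq' hq hq2 hc0 Cc2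
  have hqs : q * s = s * q := commute_of_commute_sq' hq hq2 hs0 Cs2
  have hqj : q * j = j * q := commute_of_commute_sq' hq hq2 hj0 Cj2
  have hqb : q * b = b * q := commute_of_commute_sq' hq hq2 hb0 Cb2
  -- key algebraic identity
  have h2 : ∀ x : A, p * (p * x) = p * x := fun x => by rw [← mul_assoc, hpp]
  have key : c ^ 2 * s ^ 2 - j ^ 2 = (p * e * (1 - p) + (1 - p) * e * p) ^ 2 := by
    rw [hc2, hs2, hj2]
    simp only [mul_sub, sub_mul, mul_add, add_mul, mul_one, one_mul, sq, mul_assoc,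
      hpp, h2]
    abel
  have CX : Commute q (p * e * (1 - p) + (1 - p) * e * p) :=
    ((Cp.mul_right Ce).mul_right Cp').add_right ((Cp'.mul_right Ce).mul_right Cp)
  refine ⟨⟨hqc, hqs, hqj, hqb⟩, ⟨proj_mul_nonneg' hq hqq hc0 hqc, ?_⟩,
    ⟨proj_mul_nonneg' hq hqq hs0 hqs, ?_⟩, ⟨proj_mul_nonneg' hq hqq hb0 hqb, ?_⟩⟩
  · rw [proj_mul_sq' hqq hqc, hc2]
  · rw [proj_mul_sq' hqq hqs, hs2]
  · rw [proj_mul_sq' hqq hqb, hb2, key, ← proj_mul_sq' hqq CX.eq]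
end

section
/- Let e be an effect on a complex Hilbert space H and let z := P_{ker(1−e)} be the orthogonal projection onto {x ∈ H : e x = x}. Then: (i) e − e² = (e − z) − (e − z)²; (ii) e − e² is projection free, i.e., the only projection q ∈ B(H) with q ≤ e − e² is q = 0. -/
/-!
Since `z` maps into the fixed space of the self-adjoint `e`, we get `e z = z e = z`, and (i) is a
ring identity. For (ii), `4 (e - e²) = 1 - (2e - 1)² ≤ 1`, and a projection `q` with `4 q ≤ 1`
satisfies `4 q = q (4 q) q ≤ q`, hence `q = 0`.
-/

section StarOrderedRing

variable {R : Type*} [Ring R] [PartialOrder R] [StarRing R] [StarOrderedRing R]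

theorem IsSelfAdjoint.four_nsmul_sub_sq_le_one {e : R} (he : IsSelfAdjoint e) :
    4 • (e - e ^ 2) ≤ 1 := by
  have hsq : 0 ≤ (e + e - 1) ^ 2 := ((he.add he).sub (.one R)).sq_nonneg
  rw [← sub_nonneg]
  convert hsq using 1
  noncomm_ring

theorem IsStarProjection.eq_zero_of_four_nsmul_le_one {q : R} (hq : IsStarProjection q)
    (h : 4 • q ≤ 1) : q = 0 := by
  have hq0 : 0 ≤ q := hq.nonneg
  have h4 : 4 • q ≤ q := by
    have := hq.isSelfAdjoint.conjugate_le_conjugate h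
    rwa [mul_one, mul_smul_comm, hq.isIdempotentElem.eq, smul_mul_assoc,
      hq.isIdempotentElem.eq] at this
  have h3 : 3 • q ≤ 0 := by
    rwa [succ_nsmul', add_le_iff_nonpos_right] at h4
  refine le_antisymm ?_ hq0
  calc q ≤ q + 2 • q := le_add_of_nonneg_right (nsmul_nonneg hq0 2)
    _ = 3 • q := (succ_nsmul' q 2).symm
    _ ≤ 0 := h3

theorem IsStarProjection.eq_zero_of_le_sub_sq {e q : R} (he : IsSelfAdjoint e)
    (hq : IsStarProjection q) (h : q ≤ e - e ^ 2) : q = 0 :=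
  hq.eq_zero_of_four_nsmul_le_one ((nsmul_le_nsmul_right h 4).trans he.four_nsmul_sub_sq_le_one)

end StarOrderedRing

theorem IsIdempotentElem.sub_sub_sq_sub_eq_of_mul_eq {R : Type*} [Ring R] {e z : R}
    (hz : IsIdempotentElem z) (hez : e * z = z) (hze : z * e = z) :
    (e - z) - (e - z) ^ 2 = e - e ^ 2 := by
  have hsq : (e - z) ^ 2 = e ^ 2 - z := by
    simp only [sq, sub_mul, mul_sub, hez, hze, hz.eq]
    abel
  rw [hsq]
  abel

theorem ContinuousLinearMap.mul_eq_right_of_range_le_ker_one_sub {R M : Type*} [Ring R]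
    [AddCommGroup M] [TopologicalSpace M] [IsTopologicalAddGroup M] [Module R M]
    {e z : M →L[R] M}
    (h : LinearMap.range (z : M →ₗ[R] M) ≤ LinearMap.ker ((1 - e : M →L[R] M) : M →ₗ[R] M)) :
    e * z = z := by
  ext x
  have hx : (1 - e) (z x) = 0 := h ⟨x, rfl⟩
  rw [sub_apply, one_apply_eq_self, sub_eq_zero] at hx
  exact hx.symm

theorem stmt13_general {H : Type*} [NormedAddCommGroup H] [InnerProductSpace ℂ H] [CompleteSpace H]
    (e z : H →L[ℂ] H) (he0 : 0 ≤ e)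
    (hz : IsSelfAdjoint z) (hz2 : z ^ 2 = z)
    (hzran : LinearMap.range (z : H →ₗ[ℂ] H) = LinearMap.ker ((1 - e : H →L[ℂ] H) : H →ₗ[ℂ] H)) :
    e - e ^ 2 = (e - z) - (e - z) ^ 2 ∧
    ∀ q : H →L[ℂ] H, IsSelfAdjoint q → q ^ 2 = q → q ≤ e - e ^ 2 → q = 0 := by
  have he : IsSelfAdjoint e := .of_nonneg he0
  have hez : e * z = z := ContinuousLinearMap.mul_eq_right_of_range_le_ker_one_sub hzran.le
  have hze : z * e = z := by
    simpa only [star_mul, hz.star_eq, he.star_eq] using congrArg star hez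
  have hzz : IsIdempotentElem z := (sq z).symm.trans hz2
  refine ⟨(hzz.sub_sub_sq_sub_eq_of_mul_eq hez hze).symm, fun q hq hq2 hle => ?_⟩
  exact IsStarProjection.eq_zero_of_le_sub_sq he ⟨(sq q).symm.trans hq2, hq⟩ hle

/-- In `B(H)` with the Loewner order, let `e` be an effect and let `z`
be the orthogonal projection onto `ker(1 − e) = {x : e x = x}` (encoded as: `z` is a
self-adjoint idempotent with range `ker (1 − e)`). Then:
(i) `e − e² = (e − z) − (e − z)²`;
(ii) `e − e²` is projection free: the only projection `q` with `q ≤ e − e²` is `q = 0`. -/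
theorem stmt13 {H : Type*} [NormedAddCommGroup H] [InnerProductSpace ℂ H] [CompleteSpace H]
    (e z : H →L[ℂ] H) (he0 : 0 ≤ e) (he1 : e ≤ 1)
    (hz : IsSelfAdjoint z) (hz2 : z ^ 2 = z)
    (hzran : LinearMap.range (z : H →ₗ[ℂ] H) = LinearMap.ker ((1 - e : H →L[ℂ] H) : H →ₗ[ℂ] H)) :
    e - e ^ 2 = (e - z) - (e - z) ^ 2 ∧
    ∀ q : H →L[ℂ] H, IsSelfAdjoint q → q ^ 2 = q → q ≤ e - e ^ 2 → q = 0 :=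
  stmt13_general e z he0 hz hz2 hzran
end

section
/- Let p be a projection and e an effect on a complex Hilbert space H; set d := pep⊥ + p⊥ep and b := (d²)^{1/2}, and suppose that p has rank one (the range of p is one-dimensional) and pe ≠ ep. Let k be any self-adjoint operator with k² = 1 and d = bk = kb, and set v := kpk. Then v is a rank-one projection, pv = 0, and there exists a real number β with 0 < β ≤ 1 such that b = β(p + v). -/
/-!
Write `p = |ξ⟩⟨ξ|` with `‖ξ‖ = 1`. The vector `η₀ = (1 - p) e ξ` is orthogonal to `ξ`, and
`d = |ξ⟩⟨η₀| + |η₀⟩⟨ξ| = r (|ξ⟩⟨η| + |η⟩⟨ξ|)` with `r = ‖η₀‖` and `η` a unit vector; `r > 0`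
because `d = 0` would make `p` commute with `e`, and `r ≤ ‖e‖ ≤ 1`. The swap `|ξ⟩⟨η| + |η⟩⟨ξ|`
squares to the projection `P = |ξ⟩⟨ξ| + |η⟩⟨η|`, so uniqueness of positive square roots gives
`b = r P`. Evaluating `d = b k` at `ξ` gives `P (k ξ) = η`; since `k` is unitary, `k ξ` is a unit
vector, which forces `k ξ = η` and hence `k p k = |k ξ⟩⟨k ξ| = |η⟩⟨η|`.
-/

open InnerProductSpace ContinuousLinearMap
open scoped InnerProductSpace

theorem IsIdempotentElem.commute_of_offDiag_eq_zero {R : Type*} [Ring R] {p e : R}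
    (hp : IsIdempotentElem p) (h : p * e * (1 - p) + (1 - p) * e * p = 0) : p * e = e * p := by
  have hpp (x : R) : x * p * p = x * p := by rw [mul_assoc, hp.eq]
  have key : p * e - e * p =
      p * (p * e * (1 - p) + (1 - p) * e * p) - (p * e * (1 - p) + (1 - p) * e * p) * p := by
    simp only [mul_add, add_mul, mul_sub, sub_mul, mul_one, one_mul, ← mul_assoc, hp.eq, hpp]
    abel
  rwa [h, mul_zero, zero_mul, sub_zero, sub_eq_zero] at key

theorem IsSelfAdjoint.mem_unitary_of_sq_eq_one {R : Type*} [Monoid R] [StarMul R] {k : R}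
    (hk : IsSelfAdjoint k) (hk2 : k ^ 2 = 1) : k ∈ unitary R := by
  have : star k * k = 1 := by rw [hk.star_eq, ← sq, hk2]
  exact Unitary.mem_iff.mpr ⟨this, by rwa [hk.star_eq] at this ⊢⟩

section RankOne

variable {𝕜 E : Type*} [RCLike 𝕜] [NormedAddCommGroup E] [InnerProductSpace 𝕜 E]

theorem IsStarProjection.exists_eq_rankOne_self [CompleteSpace E] {p : E →L[𝕜] E}
    (hp : IsStarProjection p) (h : Module.finrank 𝕜 (LinearMap.range (p : E →ₗ[𝕜] E)) = 1) :
    ∃ ξ : E, ‖ξ‖ = 1 ∧ p = rankOne 𝕜 ξ ξ := by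
  obtain ⟨_, hpK⟩ := isStarProjection_iff_eq_starProjection_range.mp hp
  have : FiniteDimensional 𝕜 (LinearMap.range (p : E →ₗ[𝕜] E)) :=
    Module.finite_of_finrank_eq_succ h
  let b := (stdOrthonormalBasis 𝕜 (LinearMap.range (p : E →ₗ[𝕜] E))).reindex (finCongr h)
  refine ⟨b 0, b.orthonormal.1 0, hpK.trans ?_⟩
  rw [b.starProjection_eq_sum_rankOne, Fin.sum_univ_one]

theorem finrank_range_rankOne {x y : E} (hx : x ≠ 0) (hy : y ≠ 0) :
    Module.finrank 𝕜 (LinearMap.range (rankOne 𝕜 x y : E →ₗ[𝕜] E)) = 1 :=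
  Module.finrank_eq_of_rank_eq (rank_rankOne hx hy)

theorem rankOne_self_mul_star_add_mul_rankOne_self [CompleteSpace E] (ξ : E) (a : E →L[𝕜] E) :
    rankOne 𝕜 ξ ξ * star a + a * rankOne 𝕜 ξ ξ = rankOne 𝕜 ξ (a ξ) + rankOne 𝕜 (a ξ) ξ := by
  rw [mul_def, mul_def, rankOne_comp, comp_rankOne, star_eq_adjoint, adjoint_adjoint]

theorem IsSelfAdjoint.mul_rankOne_self_mul [CompleteSpace E] {k : E →L[𝕜] E}
    (hk : IsSelfAdjoint k) (ξ : E) : k * rankOne 𝕜 ξ ξ * k = rankOne 𝕜 (k ξ) (k ξ) := by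
  rw [mul_def, mul_def, comp_rankOne, rankOne_comp, hk.adjoint_eq]

theorem rankOne_self_mul_rankOne_self_of_inner_eq_zero {ξ η : E} (h : ⟪ξ, η⟫_𝕜 = 0) :
    rankOne 𝕜 ξ ξ * rankOne 𝕜 η η = 0 := by
  rw [mul_def, rankOne_comp_rankOne, h, zero_smul]

theorem sq_rankOne_add_rankOne_swap {ξ η : E} (hξ : ‖ξ‖ = 1) (hη : ‖η‖ = 1)
    (h : ⟪ξ, η⟫_𝕜 = 0) :
    (rankOne 𝕜 ξ η + rankOne 𝕜 η ξ) ^ 2 = rankOne 𝕜 ξ ξ + rankOne 𝕜 η η := by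
  have h' : ⟪η, ξ⟫_𝕜 = 0 := inner_eq_zero_symm.mp h
  simp only [sq, mul_def, add_comp, comp_add, rankOne_comp_rankOne, inner_self_eq_norm_sq_to_K,
    hξ, hη, h, h', RCLike.ofReal_one, mul_one, one_smul, zero_smul, zero_add, add_comm]

theorem eq_of_isSymmetric_of_apply_eq {P : E →L[𝕜] E} (hP : (P : E →ₗ[𝕜] E).IsSymmetric)
    {x y : E} (hx : ‖x‖ = 1) (hy : ‖y‖ = 1) (hPy : P y = y) (hPx : P x = y) : x = y := by
  refine ((inner_eq_one_iff_of_norm_eq_one (𝕜 := 𝕜) hy hx).mp ?_).symm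
  calc ⟪y, x⟫_𝕜 = ⟪P y, x⟫_𝕜 := by rw [hPy]
    _ = ⟪y, P x⟫_𝕜 := hP y x
    _ = 1 := by rw [hPx, inner_self_eq_norm_sq_to_K, hy, RCLike.ofReal_one, one_pow]

theorem eq_of_rankOne_add_rankOne_swap_eq_mul {ξ η : E} (hξ : ‖ξ‖ = 1) (hη : ‖η‖ = 1)
    (h : ⟪ξ, η⟫_𝕜 = 0) {k : E →L[𝕜] E} (hk : ‖k ξ‖ = 1)
    (hS : rankOne 𝕜 ξ η + rankOne 𝕜 η ξ = (rankOne 𝕜 ξ ξ + rankOne 𝕜 η η) * k) : k ξ = η := by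
  refine eq_of_isSymmetric_of_apply_eq (P := rankOne 𝕜 ξ ξ + rankOne 𝕜 η η)
    (by rw [toLinearMap_add]; exact (isSymmetric_rankOne_self ξ).add (isSymmetric_rankOne_self η))
    hk hη ?_ ?_
  · simp [h, inner_self_eq_norm_sq_to_K, hη]
  · simpa [inner_eq_zero_symm.mp h, inner_self_eq_norm_sq_to_K, hξ] using congr($hS ξ).symm

theorem exists_offDiag_rankOne_self_eq_smul [CompleteSpace E] {ξ : E} (hξ : ‖ξ‖ = 1)
    {e : E →L[𝕜] E} (he : IsSelfAdjoint e) (hpe : rankOne 𝕜 ξ ξ * e ≠ e * rankOne 𝕜 ξ ξ) :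
    ∃ (r : ℝ) (η : E), 0 < r ∧ r ≤ ‖e‖ ∧ ‖η‖ = 1 ∧ ⟪ξ, η⟫_𝕜 = 0 ∧
      rankOne 𝕜 ξ ξ * e * (1 - rankOne 𝕜 ξ ξ) + (1 - rankOne 𝕜 ξ ξ) * e * rankOne 𝕜 ξ ξ =
        (r : 𝕜) • (rankOne 𝕜 ξ η + rankOne 𝕜 η ξ) := by
  set p := rankOne 𝕜 ξ ξ
  have hp : IsStarProjection p := isStarProjection_rankOne_self hξ
  set η₀ := (1 - p) (e ξ)
  have hd : p * e * (1 - p) + (1 - p) * e * p = rankOne 𝕜 ξ η₀ + rankOne 𝕜 η₀ ξ := by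
    have := rankOne_self_mul_star_add_mul_rankOne_self ξ ((1 - p) * e)
    rwa [star_mul, he.star_eq, hp.one_sub.isSelfAdjoint.star_eq, ← mul_assoc] at this
  have hη₀ : η₀ ≠ 0 := by
    refine fun h ↦ hpe (hp.isIdempotentElem.commute_of_offDiag_eq_zero ?_)
    simp only [hd, h, map_zero, _root_.zero_apply, add_zero]
  have hξη₀ : ⟪ξ, η₀⟫_𝕜 = 0 := by
    have hpξ : (1 - p) ξ = 0 := by
      rw [_root_.sub_apply, one_apply_eq_self, rankOne_apply,
        inner_self_eq_norm_sq_to_K, hξ, RCLike.ofReal_one, one_pow, one_smul, sub_self]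
    rw [← adjoint_inner_left, ← star_eq_adjoint, hp.one_sub.isSelfAdjoint.star_eq, hpξ,
      inner_zero_left]
  refine ⟨‖η₀‖, (‖η₀‖⁻¹ : 𝕜) • η₀, norm_pos_iff.mpr hη₀, ?_, norm_smul_inv_norm hη₀, ?_, ?_⟩
  · calc ‖η₀‖ ≤ ‖1 - p‖ * ‖e ξ‖ := le_opNorm _ _
      _ ≤ 1 * (‖e‖ * ‖ξ‖) := by gcongr; exacts [hp.one_sub.norm_le, le_opNorm _ _]
      _ = ‖e‖ := by rw [hξ, one_mul, mul_one]
  · rw [inner_smul_right, hξη₀, mul_zero]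
  · have h0 : (‖η₀‖ : 𝕜) ≠ 0 := by exact_mod_cast norm_ne_zero_iff.mpr hη₀
    simp only [hd, map_smul, map_smulₛₗ, smul_apply, smul_add, smul_smul,
      map_inv₀, RCLike.conj_ofReal, mul_inv_cancel₀ h0, one_smul]

end RankOne

theorem eq_smul_rankOne_add_rankOne_of_sq_eq {H : Type*} [NormedAddCommGroup H]
    [InnerProductSpace ℂ H] [CompleteSpace H] {ξ η : H} (hξ : ‖ξ‖ = 1) (hη : ‖η‖ = 1)
    (h : ⟪ξ, η⟫_ℂ = 0) {b : H →L[ℂ] H} (hb : 0 ≤ b) {r : ℝ} (hr : 0 ≤ r)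
    (hb2 : b ^ 2 = ((r : ℂ) • (rankOne ℂ ξ η + rankOne ℂ η ξ)) ^ 2) :
    b = r • (rankOne ℂ ξ ξ + rankOne ℂ η η) := by
  have hP : IsStarProjection (rankOne ℂ ξ ξ + rankOne ℂ η η) :=
    (isStarProjection_rankOne_self hξ).add (isStarProjection_rankOne_self hη)
      (rankOne_self_mul_rankOne_self_of_inner_eq_zero h)
  refine (CFC.mul_self_eq_mul_self_iff b _ hb (smul_nonneg hr hP.nonneg)).mp ?_
  rw [← sq, ← sq, hb2, smul_pow, smul_pow, sq_rankOne_add_rankOne_swap hξ hη h,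
    hP.pow_eq two_ne_zero, ← Complex.ofReal_pow, Complex.coe_smul]

theorem stmt15_general {H : Type*} [NormedAddCommGroup H] [InnerProductSpace ℂ H] [CompleteSpace H]
    (p e b k : H →L[ℂ] H)
    (hp : IsSelfAdjoint p) (hp2 : p ^ 2 = p)
    (hrank : Module.finrank ℂ (LinearMap.range (p : H →ₗ[ℂ] H)) = 1)
    (he0 : 0 ≤ e) (he1 : e ≤ 1)
    (hpe : p * e ≠ e * p)
    (hb0 : 0 ≤ b) (hb2 : b ^ 2 = (p * e * (1 - p) + (1 - p) * e * p) ^ 2)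
    (hk : IsSelfAdjoint k) (hk2 : k ^ 2 = 1)
    (hbk : p * e * (1 - p) + (1 - p) * e * p = b * k) :
    (IsSelfAdjoint (k * p * k) ∧ (k * p * k) ^ 2 = k * p * k ∧
      Module.finrank ℂ (LinearMap.range ((k * p * k : H →L[ℂ] H) : H →ₗ[ℂ] H)) = 1) ∧
    p * (k * p * k) = 0 ∧
    ∃ β : ℝ, 0 < β ∧ β ≤ 1 ∧ b = β • (p + k * p * k) := by
  have hproj : IsStarProjection p := ⟨by rw [IsIdempotentElem, ← sq, hp2], hp⟩
  obtain ⟨ξ, hξ, rfl⟩ := hproj.exists_eq_rankOne_self hrank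
  obtain ⟨r, η, hr0, hre, hη, hξη, hd⟩ :=
    exists_offDiag_rankOne_self_eq_smul hξ he0.isSelfAdjoint hpe
  have hb : b = r • (rankOne ℂ ξ ξ + rankOne ℂ η η) :=
    eq_smul_rankOne_add_rankOne_of_sq_eq hξ hη hξη hb0 hr0.le (hd ▸ hb2)
  have hkξ : k ξ = η := by
    refine eq_of_rankOne_add_rankOne_swap_eq_mul hξ hη hξη
      ((norm_map_of_mem_unitary (hk.mem_unitary_of_sq_eq_one hk2) ξ).trans hξ) ?_
    have h : (r : ℂ) • (rankOne ℂ ξ η + rankOne ℂ η ξ) =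
        (r : ℂ) • ((rankOne ℂ ξ ξ + rankOne ℂ η η) * k) := by
      calc _ = b * k := hd.symm.trans hbk
        _ = _ := by rw [hb, ← Complex.coe_smul, smul_mul_assoc]
    exact smul_right_injective _ (Complex.ofReal_ne_zero.mpr hr0.ne') h
  have hv : k * rankOne ℂ ξ ξ * k = rankOne ℂ η η := by rw [hk.mul_rankOne_self_mul, hkξ]
  have hη0 : η ≠ 0 := norm_ne_zero_iff.mp (hη ▸ one_ne_zero)
  rw [hv]
  refine ⟨⟨(isStarProjection_rankOne_self hη).isSelfAdjoint,
    (isStarProjection_rankOne_self hη).pow_eq two_ne_zero, finrank_range_rankOne hη0 hη0⟩,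
    rankOne_self_mul_rankOne_self_of_inner_eq_zero hξη, r, hr0,
    hre.trans ((CStarAlgebra.norm_le_one_iff_of_nonneg e he0).mpr he1), hb⟩

/-- In `B(H)`, let `p` be a rank-one projection and `e` an effect with
`pe ≠ ep`; set `d := pep⊥ + p⊥ep` and let `b` be the positive square root of `d²`
(encoded by `0 ≤ b` and `b² = d²`).  Let `k` be any self-adjoint operator with `k² = 1`
and `d = bk = kb`, and set `v := kpk`.  Then `v` is a rank-one projection, `pv = 0`,
and there is a real `β` with `0 < β ≤ 1` such that `b = β(p + v)`. -/
theorem stmt15 {H : Type*} [NormedAddCommGroup H] [InnerProductSpace ℂ H] [CompleteSpace H]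
    (p e b k : H →L[ℂ] H)
    (hp : IsSelfAdjoint p) (hp2 : p ^ 2 = p)
    (hrank : Module.finrank ℂ (LinearMap.range (p : H →ₗ[ℂ] H)) = 1)
    (he0 : 0 ≤ e) (he1 : e ≤ 1)
    (hpe : p * e ≠ e * p)
    (hb0 : 0 ≤ b) (hb2 : b ^ 2 = (p * e * (1 - p) + (1 - p) * e * p) ^ 2)
    (hk : IsSelfAdjoint k) (hk2 : k ^ 2 = 1)
    (hbk : p * e * (1 - p) + (1 - p) * e * p = b * k)
    (hkb : p * e * (1 - p) + (1 - p) * e * p = k * b) :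
    (IsSelfAdjoint (k * p * k) ∧ (k * p * k) ^ 2 = k * p * k ∧
      Module.finrank ℂ (LinearMap.range ((k * p * k : H →L[ℂ] H) : H →ₗ[ℂ] H)) = 1) ∧
    p * (k * p * k) = 0 ∧
    ∃ β : ℝ, 0 < β ∧ β ≤ 1 ∧ b = β • (p + k * p * k) :=
  stmt15_general p e b k hp hp2 hrank he0 he1 hpe hb0 hb2 hk hk2 hbk
end

section
/- Let p be a projection, e an effect, and α a real number with α > 0 and pep = α·p. Set a := α⁻¹(pep⊥ + p⊥ep), y := p⊥(1 − a), and y* := (1 − a)p⊥ (the adjoint of y). Then: (i) for every f with 0 ≤ f ≤ p⊥ one has y f y* = f; (ii) y e y* = e − α⁻¹ e p e, and in particular 0 ≤ e − α⁻¹ e p e. -/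
/-!
Write `q = 1 - p`. Since `p` is idempotent, `y = q - α⁻¹ q e p` and `y* = q - α⁻¹ p e q`.
Conjugation by `y` fixes every `f` with `f p = p f = 0`, which holds when `0 ≤ f ≤ q`.
Because `p e p = α p`, the `α⁻²` term of `y e y*` reduces to `α⁻¹ q e p e q`, so
`y e y* = q g q` with `g = e - α⁻¹ e p e`; again `g p = p g = 0`, so `y e y* = g`, and
`g ≥ 0` as a conjugate of `e ≥ 0`.
-/

section Corner

variable {𝕜 A : Type*} [Field 𝕜] [Ring A] [Algebra 𝕜 A]

lemma IsIdempotentElem.one_sub_mul_one_sub_smul_offDiag {p : A} (hp : IsIdempotentElem p)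
    (c : 𝕜) (e : A) :
    (1 - p) * (1 - c • (p * e * (1 - p) + (1 - p) * e * p))
      = (1 - p) - c • ((1 - p) * e * p) := by
  have hqp : (1 - p) * p = 0 := by rw [sub_mul, one_mul, hp.eq, sub_self]
  have hq : (1 - p) * (1 - p) = 1 - p := hp.one_sub.eq
  simp only [mul_sub, mul_one, mul_smul_comm, mul_add, ← mul_assoc, hqp, hq, zero_mul, sub_zero,
    zero_add]

lemma IsIdempotentElem.one_sub_smul_offDiag_mul_one_sub {p : A} (hp : IsIdempotentElem p)
    (c : 𝕜) (e : A) :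
    (1 - c • (p * e * (1 - p) + (1 - p) * e * p)) * (1 - p)
      = (1 - p) - c • (p * e * (1 - p)) := by
  have hpq : p * (1 - p) = 0 := by rw [mul_sub, mul_one, hp.eq, sub_self]
  have hq : (1 - p) * (1 - p) = 1 - p := hp.one_sub.eq
  simp only [sub_mul, one_mul, smul_mul_assoc, add_mul, mul_assoc, hpq, hq, mul_zero, sub_zero,
    add_zero]

lemma one_sub_mul_mul_one_sub_of_mul_eq_zero {p f : A} (hfp : f * p = 0) (hpf : p * f = 0) :
    (1 - p) * f * (1 - p) = f := by
  simp only [sub_mul, mul_sub, one_mul, mul_one, hfp, hpf, sub_zero]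

lemma sub_smul_mul_mul_sub_smul_of_mul_eq_zero {p f : A} (hfp : f * p = 0) (hpf : p * f = 0)
    (q e : A) (c : 𝕜) :
    (q - c • (q * e * p)) * f * (q - c • (p * e * q)) = q * f * q := by
  simp only [sub_mul, mul_sub, smul_mul_assoc, mul_smul_comm, mul_assoc, hpf, mul_zero,
    smul_zero, sub_zero]
  simp only [← mul_assoc, hfp, zero_mul, mul_zero, smul_zero, sub_zero]

lemma sub_smul_mul_mul_sub_smul_of_mul_mul_eq_smul {p e : A} {α : 𝕜} (hα : α ≠ 0)
    (hpep : p * e * p = α • p) (q : A) :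
    (q - α⁻¹ • (q * e * p)) * e * (q - α⁻¹ • (p * e * q))
      = q * (e - α⁻¹ • (e * p * e)) * q := by
  have hpep_mul (x : A) : p * (e * (p * x)) = α • (p * x) := by
    rw [← mul_assoc, ← mul_assoc, hpep, smul_mul_assoc]
  simp only [sub_mul, mul_sub, smul_mul_assoc, mul_smul_comm, mul_assoc, hpep_mul, smul_smul]
  match_scalars <;> field_simp
  ring

lemma sub_smul_mul_mul_mul_eq_zero {p e : A} {α : 𝕜} (hα : α ≠ 0)
    (hpep : p * e * p = α • p) :
    (e - α⁻¹ • (e * p * e)) * p = 0 := by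
  have hepep : e * p * e * p = e * (p * e * p) := by simp only [mul_assoc]
  rw [sub_mul, smul_mul_assoc, hepep, hpep, mul_smul_comm, smul_smul, inv_mul_cancel₀ hα,
    one_smul, sub_self]

lemma mul_sub_smul_mul_mul_eq_zero {p e : A} {α : 𝕜} (hα : α ≠ 0)
    (hpep : p * e * p = α • p) :
    p * (e - α⁻¹ • (e * p * e)) = 0 := by
  rw [mul_sub, mul_smul_comm, ← mul_assoc, ← mul_assoc, hpep, smul_mul_assoc, smul_smul,
    inv_mul_cancel₀ hα, one_smul, sub_self]

end Corner

theorem stmt18_general {A : Type*} [CStarAlgebra A] [PartialOrder A] [StarOrderedRing A]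
    (p e : A) (hp : IsSelfAdjoint p) (hp2 : p ^ 2 = p)
    (he0 : 0 ≤ e)
    (α : ℝ) (hα : 0 < α) (hpep : p * e * p = α • p)
    (a y ystar : A)
    (ha : a = α⁻¹ • (p * e * (1 - p) + (1 - p) * e * p))
    (hy : y = (1 - p) * (1 - a)) (hystar : ystar = (1 - a) * (1 - p)) :
    (∀ f : A, 0 ≤ f → f ≤ 1 - p → y * f * ystar = f) ∧
    y * e * ystar = e - α⁻¹ • (e * p * e) ∧
    0 ≤ e - α⁻¹ • (e * p * e) := by
  have hidem : IsIdempotentElem p := (sq p).symm.trans hp2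
  rw [ha, hidem.one_sub_mul_one_sub_smul_offDiag] at hy
  rw [ha, hidem.one_sub_smul_offDiag_mul_one_sub] at hystar
  have hconj : y * e * ystar = e - α⁻¹ • (e * p * e) := by
    rw [hy, hystar, sub_smul_mul_mul_sub_smul_of_mul_mul_eq_smul hα.ne' hpep,
      one_sub_mul_mul_one_sub_of_mul_eq_zero (sub_smul_mul_mul_mul_eq_zero hα.ne' hpep)
        (mul_sub_smul_mul_mul_eq_zero hα.ne' hpep)]
  refine ⟨fun f hf0 hf1 => ?_, hconj, ?_⟩
  · obtain ⟨hfq, hqf⟩ :=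
      (IsStarProjection.one_sub ⟨hidem, hp⟩).mul_right_and_mul_left_of_nonneg_of_le hf0 hf1
    have hfp : f * p = 0 := sub_eq_self.mp (by rwa [mul_sub, mul_one] at hfq)
    have hpf : p * f = 0 := sub_eq_self.mp (by rwa [sub_mul, one_mul] at hqf)
    rw [hy, hystar, sub_smul_mul_mul_sub_smul_of_mul_eq_zero hfp hpf,
      one_sub_mul_mul_one_sub_of_mul_eq_zero hfp hpf]
  · have hstar : star y = ystar := by
      simp [hy, hystar, star_mul, hp.star_eq, he0.isSelfAdjoint.star_eq, mul_assoc]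
    rw [← hconj, ← hstar]
    exact star_right_conjugate_nonneg he0 y

/-- In a unital C*-algebra, let `p` be a projection, `e` an effect, and
`α` a real number with `α > 0` and `pep = α • p`.  Set
`a := α⁻¹ • (pep⊥ + p⊥ep)`, `y := p⊥(1 − a)`, and `y* := (1 − a)p⊥`. Then:
(i) for every `f` with `0 ≤ f ≤ p⊥` one has `y f y* = f`;
(ii) `y e y* = e − α⁻¹ • (epe)`, and in particular `0 ≤ e − α⁻¹ • (epe)`. -/
theorem stmt18 {A : Type*} [CStarAlgebra A] [PartialOrder A] [StarOrderedRing A]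
    (p e : A) (hp : IsSelfAdjoint p) (hp2 : p ^ 2 = p)
    (he0 : 0 ≤ e) (he1 : e ≤ 1)
    (α : ℝ) (hα : 0 < α) (hpep : p * e * p = α • p)
    (a y ystar : A)
    (ha : a = α⁻¹ • (p * e * (1 - p) + (1 - p) * e * p))
    (hy : y = (1 - p) * (1 - a)) (hystar : ystar = (1 - a) * (1 - p)) :
    (∀ f : A, 0 ≤ f → f ≤ 1 - p → y * f * ystar = f) ∧
    y * e * ystar = e - α⁻¹ • (e * p * e) ∧
    0 ≤ e - α⁻¹ • (e * p * e) :=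
  stmt18_general p e hp hp2 he0 α hα hpep a y ystar ha hy hystar
end
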